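/- arXiv:1904.05733 — 12 statements merged into one kernel-verified Lean document; each statement's English description precedes it below -/
import Mathlib

section
/- For every integer d, the number d*b - a belongs to S if and only if d ≥ a. -/
/-- For coprime integers `a, b ≥ 2`, with `S` the numerical semigroup generated by
`a` and `b`, an integer `d*b - a` belongs to `S` if and only if `d ≥ a`. -/
theorem dvd_sub_mem_semigroup_iff (a b : ℕ) (hab : Nat.Coprime a b)
    (ha : 2 ≤ a) (hb : 2 ≤ b) (d : ℤ) :
    (∃ u v : ℕ, d * (b : ℤ) - (a : ℤ) = (u : ℤ) * a + (v : ℤ) * b) ↔ (a : ℤ) ≤ d := by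
  have hbpos : (0:ℤ) < b := by exact_mod_cast lt_of_lt_of_le two_pos hb
  have hapos : (0:ℤ) < a := by exact_mod_cast lt_of_lt_of_le two_pos ha
  constructor
  · rintro ⟨u, v, h⟩
    have key : (d - v) * b = (u + 1) * a := by ring_nf; linarith
    have hcop : IsCoprime (a:ℤ) (b:ℤ) := Int.isCoprime_iff_gcd_eq_one.mpr hab
    have hdvd : (a:ℤ) ∣ (d - v) * b := ⟨u + 1, by linarith [key]⟩
    have hdvd' : (a:ℤ) ∣ d - v := hcop.dvd_of_dvd_mul_right hdvd
    have hpos : (0:ℤ) < d - v := by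
      by_contra hc
      push_neg at hc
      nlinarith [mul_nonneg (Int.natCast_nonneg u) hapos.le]
    have := Int.le_of_dvd hpos hdvd'
    have hv : (0:ℤ) ≤ v := Int.natCast_nonneg v
    linarith
  · intro hd
    obtain ⟨k, hk⟩ := Int.le.dest hd
    refine ⟨b - 1, k, ?_⟩
    have hb1 : ((b - 1 : ℕ) : ℤ) = (b:ℤ) - 1 := by
      have : 1 ≤ b := le_trans one_le_two hb
      push_cast [this]; ring
    rw [hb1, ← hk]
    ring
end

section
/- The set of integers α such that both α - m1 ∈ S and α - m2 ∈ S is equal to {m1 + m2} ∪ {a*b + γ : γ ∈ S}. -/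
/-- For coprime integers `a, b ≥ 2`, `m1 = b*(a-1)`, `m2 = a*(b-1)`, and `S` the
numerical semigroup generated by `a` and `b`, the set of integers `α` with
`α - m1 ∈ S` and `α - m2 ∈ S` equals `{m1 + m2} ∪ {a*b + γ : γ ∈ S}`. -/
theorem inter_shift_description (a b : ℕ) (hab : Nat.Coprime a b)
    (ha : 2 ≤ a) (hb : 2 ≤ b) :
    {α : ℤ | (∃ u v : ℕ, α - (b : ℤ) * (a - 1) = (u : ℤ) * a + (v : ℤ) * b) ∧
        (∃ u v : ℕ, α - (a : ℤ) * (b - 1) = (u : ℤ) * a + (v : ℤ) * b)} =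
      {(b : ℤ) * (a - 1) + (a : ℤ) * (b - 1)} ∪
        {α : ℤ | ∃ γ : ℤ, (∃ u v : ℕ, γ = (u : ℤ) * a + (v : ℤ) * b) ∧
          α = (a : ℤ) * b + γ} := by
  have ha1 : (1:ℤ) ≤ a := by exact_mod_cast le_trans one_le_two ha
  have hb1 : (1:ℤ) ≤ b := by exact_mod_cast le_trans one_le_two hb
  ext α
  simp only [Set.mem_setOf_eq, Set.mem_union, Set.mem_singleton_iff]
  constructor
  · rintro ⟨⟨u, v, h1⟩, ⟨u', v', h2⟩⟩
    rcases Nat.eq_zero_or_pos v with hv | hv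
    · subst hv
      push_cast at h1 h2
      have key : ((v':ℤ) + 1) * b = ((u:ℤ) - u' + 1) * a := by linarith
      have hadvd : (a:ℤ) ∣ ((v':ℤ) + 1) := by
        have hd : (a:ℤ) ∣ ((v':ℤ) + 1) * b := ⟨(u:ℤ) - u' + 1, by linarith⟩
        have hcop : IsCoprime (a:ℤ) (b:ℤ) := Int.isCoprime_iff_gcd_eq_one.mpr (by
          simpa [Int.gcd_natCast_natCast] using hab)
        exact hcop.dvd_of_dvd_mul_right hd
      obtain ⟨k, hk⟩ := hadvd
      have hk1 : 1 ≤ k := by nlinarith [Int.natCast_nonneg v', ha1]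
      have hu : (u:ℤ) = (u':ℤ) + k * b - 1 := by
        have ha0 : (a:ℤ) ≠ 0 := by linarith
        have h3 : ((u:ℤ) - u' + 1) * a = (k * b) * a := by rw [← key, hk]; ring
        have := mul_right_cancel₀ ha0 h3
        linarith
      rcases le_or_gt ((b:ℤ)) u with hub | hub
      · -- u ≥ b : right branch
        right
        have hubn : b ≤ u := by exact_mod_cast hub
        refine ⟨((u - b : ℕ):ℤ) * a + ((a - 1 : ℕ):ℤ) * b, ⟨u - b, a - 1, rfl⟩, ?_⟩
        push_cast [Nat.cast_sub hubn, Nat.cast_sub (le_trans one_le_two ha)]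
        linarith
      · -- u = b - 1 : left branch
        left
        have huu : (u':ℤ) ≥ 0 := Int.natCast_nonneg u'
        have heq : (u:ℤ) = (b:ℤ) - 1 := by nlinarith
        rw [heq] at h1
        linarith
    · right
      refine ⟨(u:ℤ) * a + ((v - 1 : ℕ):ℤ) * b, ⟨u, v - 1, rfl⟩, ?_⟩
      push_cast [Nat.cast_sub hv] at h1 ⊢
      linarith
  · rintro (rfl | ⟨γ, ⟨u, v, rfl⟩, rfl⟩)
    · constructor
      · exact ⟨b - 1, 0, by push_cast [Nat.cast_sub (le_trans one_le_two hb)]; ring⟩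
      · exact ⟨0, a - 1, by push_cast [Nat.cast_sub (le_trans one_le_two ha)]; ring⟩
    · exact ⟨⟨u, v + 1, by push_cast; ring⟩, ⟨u + 1, v, by push_cast; ring⟩⟩
end

section
/- For all natural numbers u and v, the two conditions (u ≤ b - 2 and v ≤ a - 2) hold if and only if both u*a + v*b - m1 ∉ S and u*a + v*b - m2 ∉ S. -/
/-- For coprime `a, b ≥ 2`, `m1 = b*(a-1)`, `m2 = a*(b-1)`: for naturals `u, v`,
`(u ≤ b-2 ∧ v ≤ a-2)` iff `u*a + v*b - m1 ∉ S` and `u*a + v*b - m2 ∉ S`. -/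
theorem not_mem_shift_iff (a b : ℕ) (hab : Nat.Coprime a b)
    (ha : 2 ≤ a) (hb : 2 ≤ b) (u v : ℕ) :
    (u ≤ b - 2 ∧ v ≤ a - 2) ↔
      (¬ ∃ s t : ℕ, (u : ℤ) * a + (v : ℤ) * b - (b : ℤ) * (a - 1) =
          (s : ℤ) * a + (t : ℤ) * b) ∧
      (¬ ∃ s t : ℕ, (u : ℤ) * a + (v : ℤ) * b - (a : ℤ) * (b - 1) =
          (s : ℤ) * a + (t : ℤ) * b) := by
  have hcop : IsCoprime (a : ℤ) (b : ℤ) := by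
    rw [Int.isCoprime_iff_gcd_eq_one, Int.gcd_natCast_natCast]
    exact hab
  have ha' : (2 : ℤ) ≤ (a : ℤ) := by exact_mod_cast ha
  have hb' : (2 : ℤ) ≤ (b : ℤ) := by exact_mod_cast hb
  constructor
  · rintro ⟨hu, hv⟩
    have hu' : (u : ℤ) ≤ (b : ℤ) - 2 := by omega
    have hv' : (v : ℤ) ≤ (a : ℤ) - 2 := by omega
    constructor
    · rintro ⟨s, t, h⟩
      have key : (a : ℤ) * ((u : ℤ) - b - s) = b * ((t : ℤ) - v - 1) := by linarith
      have hdvd : (b : ℤ) ∣ ((u : ℤ) - b - s) :=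
        hcop.symm.dvd_of_dvd_mul_left ⟨(t : ℤ) - v - 1, by linarith⟩
      obtain ⟨k, hk⟩ := hdvd
      have hts : (t : ℤ) - v - 1 = a * k := by
        have : (b : ℤ) * ((a : ℤ) * k) = b * ((t : ℤ) - v - 1) := by
          rw [← key, hk]; ring
        have hb0 : (b : ℤ) ≠ 0 := by linarith
        have := mul_left_cancel₀ hb0 this
        linarith
      have hk1 : k ≤ -1 := by nlinarith [s.cast_nonneg (α := ℤ)]
      have : (a : ℤ) * k ≤ (a : ℤ) * (-1) := by
        apply mul_le_mul_of_nonneg_left hk1 (by linarith)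
      have ht0 : (0 : ℤ) ≤ t := t.cast_nonneg
      linarith
    · rintro ⟨s, t, h⟩
      have key : (a : ℤ) * ((u : ℤ) + 1 - s) = b * ((t : ℤ) - v + a) := by linarith
      have hdvd : (b : ℤ) ∣ ((u : ℤ) + 1 - s) :=
        hcop.symm.dvd_of_dvd_mul_left ⟨(t : ℤ) - v + a, by linarith⟩
      obtain ⟨k, hk⟩ := hdvd
      have hts : (t : ℤ) - v + a = a * k := by
        have : (b : ℤ) * ((a : ℤ) * k) = b * ((t : ℤ) - v + a) := by
          rw [← key, hk]; ring
        have hb0 : (b : ℤ) ≠ 0 := by linarith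
        have := mul_left_cancel₀ hb0 this
        linarith
      have hk0 : k ≤ 0 := by nlinarith [s.cast_nonneg (α := ℤ)]
      have : (a : ℤ) * k ≤ 0 := mul_nonpos_of_nonneg_of_nonpos (by linarith) hk0
      have ht0 : (0 : ℤ) ≤ t := t.cast_nonneg
      linarith
  · rintro ⟨h1, h2⟩
    by_contra hcon
    rcases not_and_or.mp hcon with hu | hv
    · apply h2
      refine ⟨u + 1 - b, v, ?_⟩
      have hc : ((u + 1 - b : ℕ) : ℤ) = (u : ℤ) + 1 - b := by omega
      rw [hc]; ring
    · apply h1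
      refine ⟨u, v + 1 - a, ?_⟩
      have hc : ((v + 1 - a : ℕ) : ℤ) = (v : ℤ) + 1 - a := by omega
      rw [hc]; ring
end

section
/- For all natural numbers u and v, the two conditions (u ≤ b - 2 and v ≤ a - 2) hold if and only if u*a + v*b - (a*b - a - b) ∉ S. -/
/-- For coprime `a, b ≥ 2` and the Frobenius number `a*b - a - b` of `S`:
for naturals `u, v`, `(u ≤ b-2 ∧ v ≤ a-2)` iff `u*a + v*b - (a*b - a - b) ∉ S`. -/
theorem not_mem_sub_frobenius_iff (a b : ℕ) (hab : Nat.Coprime a b)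
    (ha : 2 ≤ a) (hb : 2 ≤ b) (u v : ℕ) :
    (u ≤ b - 2 ∧ v ≤ a - 2) ↔
      ¬ ∃ s t : ℕ, (u : ℤ) * a + (v : ℤ) * b - ((a : ℤ) * b - a - b) =
          (s : ℤ) * a + (t : ℤ) * b := by
  have ha' : (2:ℤ) ≤ a := by exact_mod_cast ha
  have hb' : (2:ℤ) ≤ b := by exact_mod_cast hb
  have hco : IsCoprime (a:ℤ) (b:ℤ) := Nat.isCoprime_iff_coprime.mpr hab
  constructor
  · rintro ⟨hu, hv⟩ ⟨s, t, h⟩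
    have hun : u + 2 ≤ b := by omega
    have hu' : (u:ℤ) + 2 ≤ b := by exact_mod_cast hun
    have hvn : v + 2 ≤ a := by omega
    have hv' : (v:ℤ) + 2 ≤ a := by exact_mod_cast hvn
    have key : ((u:ℤ) + 1 - s) * a + ((v:ℤ) + 1 - t) * b = a * b := by linarith [h]
    have hdvd1 : (b:ℤ) ∣ ((u:ℤ) + 1 - s) := by
      have : (b:ℤ) ∣ ((u:ℤ) + 1 - s) * a := ⟨(a:ℤ) - ((v:ℤ) + 1 - t), by linarith [key]⟩
      exact (hco.symm.dvd_of_dvd_mul_right this)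
    have hdvd2 : (a:ℤ) ∣ ((v:ℤ) + 1 - t) := by
      have : (a:ℤ) ∣ ((v:ℤ) + 1 - t) * b := ⟨(b:ℤ) - ((u:ℤ) + 1 - s), by linarith [key]⟩
      exact (hco.dvd_of_dvd_mul_right this)
    obtain ⟨k, hk⟩ := hdvd1
    obtain ⟨m, hm⟩ := hdvd2
    have hsum : a * b * (k + m) = a * b := by rw [hk, hm] at key; ring_nf; ring_nf at key; linarith
    have hkm : k + m = 1 := by
      have hab0 : (0:ℤ) < a * b := by positivity
      have := mul_left_cancel₀ (ne_of_gt hab0) (by linarith [hsum] : (a:ℤ) * b * (k+m) = a*b*1)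
      linarith
    have hs0 : (0:ℤ) ≤ s := Int.ofNat_nonneg s
    have ht0 : (0:ℤ) ≤ t := Int.ofNat_nonneg t
    have hk0 : k ≤ 0 := by nlinarith [hk]
    have hm0 : m ≤ 0 := by nlinarith [hm]
    omega
  · intro hns
    by_contra hcon
    rcases not_and_or.mp hcon with h | h
    · have hub : b - 1 ≤ u := by omega
      refine hns ⟨u - (b-1), v + 1, ?_⟩
      have hcast : ((u - (b-1) : ℕ) : ℤ) = (u:ℤ) - b + 1 := by
        have h1 : 1 ≤ b := by omega
        push_cast [Nat.cast_sub hub, Nat.cast_sub h1]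
        ring
      rw [hcast]; push_cast; ring
    · have hva : a - 1 ≤ v := by omega
      refine hns ⟨u + 1, v - (a-1), ?_⟩
      have hcast : ((v - (a-1) : ℕ) : ℤ) = (v:ℤ) - a + 1 := by
        have h1 : 1 ≤ a := by omega
        push_cast [Nat.cast_sub hva, Nat.cast_sub h1]
        ring
      rw [hcast]; push_cast; ring
end

section
/- For all natural numbers u and v, one has u*a + v*b - a*(b - 1) ∉ S if and only if (u ≤ b - 2 and v ≤ a - 1). -/
/-- For coprime `a, b ≥ 2`: for naturals `u, v`, `u*a + v*b - a*(b-1) ∉ S` iff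
`u ≤ b-2` and `v ≤ a-1`. -/
theorem not_mem_sub_m2_iff (a b : ℕ) (hab : Nat.Coprime a b)
    (ha : 2 ≤ a) (hb : 2 ≤ b) (u v : ℕ) :
    (¬ ∃ s t : ℕ, (u : ℤ) * a + (v : ℤ) * b - (a : ℤ) * (b - 1) =
        (s : ℤ) * a + (t : ℤ) * b) ↔ (u ≤ b - 2 ∧ v ≤ a - 1) := by
  have ha0 : (a : ℤ) ≠ 0 := by positivity
  constructor
  · intro h
    by_contra hc
    rw [not_and_or] at hc
    push_neg at hc
    apply h
    rcases hc with h1 | h2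
    · refine ⟨u - (b - 1), v, ?_⟩
      have hbu : b - 1 ≤ u := by omega
      have : ((u - (b-1) : ℕ) : ℤ) = (u : ℤ) - ((b : ℤ) - 1) := by
        push_cast [Nat.cast_sub hbu]
        omega
      rw [this]; ring
    · refine ⟨u + 1, v - a, ?_⟩
      have hav : a ≤ v := by omega
      have : ((v - a : ℕ) : ℤ) = (v : ℤ) - a := by
        push_cast [Nat.cast_sub hav]
        omega
      rw [this]
      push_cast
      ring
  · rintro ⟨hu, hv⟩ ⟨s, t, heq⟩
    have hdvd : (a : ℤ) ∣ ((t : ℤ) - v) * b := by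
      refine ⟨(u : ℤ) - ((b : ℤ) - 1) - s, ?_⟩
      linarith [heq]
    have hcop : IsCoprime (a : ℤ) (b : ℤ) := by
      exact Int.isCoprime_iff_gcd_eq_one.mpr (by exact_mod_cast hab)
    have hdvd2 : (a : ℤ) ∣ ((t : ℤ) - v) := (hcop.dvd_of_dvd_mul_right) hdvd
    obtain ⟨k, hk⟩ := hdvd2
    -- t = v + a*k
    have hknn : 0 ≤ k := by
      by_contra hneg
      push_neg at hneg
      have ht0 : (0 : ℤ) ≤ t := by positivity
      have hva : (v : ℤ) ≤ (a : ℤ) - 1 := by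
        have : (v : ℤ) ≤ ((a - 1 : ℕ) : ℤ) := by exact_mod_cast hv
        have : ((a - 1 : ℕ) : ℤ) = (a : ℤ) - 1 := by
          have : 1 ≤ a := by omega
          push_cast [Nat.cast_sub this]; ring
        omega
      have : (t : ℤ) = v + a * k := by linarith [hk]
      nlinarith
    -- from heq: u = s + (b-1) + k*b
    have key : (u : ℤ) = s + ((b : ℤ) - 1) + k * b := by
      have h2 : (a : ℤ) * ((u : ℤ) - ((b:ℤ) - 1) - s) = (a : ℤ) * (k * b) := by
        have : ((t : ℤ) - v) * b = (a * k) * b := by rw [hk]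
        nlinarith [heq, this]
      have := mul_left_cancel₀ ha0 h2
      linarith
    have hub : (u : ℤ) ≤ ((b : ℤ)) - 2 := by
      have : (u : ℤ) ≤ ((b - 2 : ℕ) : ℤ) := by exact_mod_cast hu
      have h2 : ((b - 2 : ℕ) : ℤ) = (b : ℤ) - 2 := by
        have : 2 ≤ b := hb
        push_cast [Nat.cast_sub this]; ring
      omega
    have hs0 : (0 : ℤ) ≤ s := by positivity
    have hkb : 0 ≤ k * (b : ℤ) := mul_nonneg hknn (by positivity)
    linarith
end

section
/- For all integers α and β, if α - m1 ∈ S, α - m2 ∈ S, β - m1 ∈ S and β - m2 ∈ S, then both α + β - a*b - m1 ∈ S and α + β - a*b - m2 ∈ S. -/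
lemma keyA (a b : ℕ) (x y : ℤ) (u v u' v' : ℕ)
    (hx : x = (u:ℤ)*a + (v:ℤ)*b) (hy : y = (u':ℤ)*a + (v':ℤ)*b)
    (h : 1 ≤ u + u') : ∃ p q : ℕ, x + y - a = (p:ℤ)*a + (q:ℤ)*b := by
  obtain ⟨k, hk⟩ : ∃ k, u + u' = k + 1 := ⟨u + u' - 1, by omega⟩
  refine ⟨k, v + v', ?_⟩
  have hk' : (u:ℤ) + u' = k + 1 := by exact_mod_cast congrArg (Nat.cast : ℕ → ℤ) hk
  push_cast
  linear_combination hx + hy + (a:ℤ) * hk'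

lemma keyB (a b : ℕ) (x y : ℤ) (u v u' v' : ℕ)
    (hx : x = (u:ℤ)*a + (v:ℤ)*b) (hy : y = (u':ℤ)*a + (v':ℤ)*b)
    (h : 1 ≤ v + v') : ∃ p q : ℕ, x + y - b = (p:ℤ)*a + (q:ℤ)*b := by
  obtain ⟨k, hk⟩ : ∃ k, v + v' = k + 1 := ⟨v + v' - 1, by omega⟩
  refine ⟨u + u', k, ?_⟩
  have hk' : (v:ℤ) + v' = k + 1 := by exact_mod_cast congrArg (Nat.cast : ℕ → ℤ) hk
  push_cast
  linear_combination hx + hy + (b:ℤ) * hk'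

/-- For coprime `a, b ≥ 2`, `m1 = b*(a-1)`, `m2 = a*(b-1)`: if `α - m1, α - m2,
β - m1, β - m2 ∈ S`, then `α + β - a*b - m1 ∈ S` and `α + β - a*b - m2 ∈ S`. -/
theorem sum_sub_ab_mem (a b : ℕ) (hab : Nat.Coprime a b)
    (ha : 2 ≤ a) (hb : 2 ≤ b) (α β : ℤ)
    (h1 : ∃ u v : ℕ, α - (b : ℤ) * (a - 1) = (u : ℤ) * a + (v : ℤ) * b)
    (h2 : ∃ u v : ℕ, α - (a : ℤ) * (b - 1) = (u : ℤ) * a + (v : ℤ) * b)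
    (h3 : ∃ u v : ℕ, β - (b : ℤ) * (a - 1) = (u : ℤ) * a + (v : ℤ) * b)
    (h4 : ∃ u v : ℕ, β - (a : ℤ) * (b - 1) = (u : ℤ) * a + (v : ℤ) * b) :
    (∃ u v : ℕ, α + β - (a : ℤ) * b - (b : ℤ) * (a - 1) = (u : ℤ) * a + (v : ℤ) * b) ∧
    (∃ u v : ℕ, α + β - (a : ℤ) * b - (a : ℤ) * (b - 1) = (u : ℤ) * a + (v : ℤ) * b) := by
  obtain ⟨u1, v1, h1⟩ := h1
  obtain ⟨u2, v2, h2⟩ := h2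
  obtain ⟨u3, v3, h3⟩ := h3
  obtain ⟨u4, v4, h4⟩ := h4
  constructor
  · by_cases c1 : 1 ≤ v1 + v3
    · obtain ⟨p, q, hpq⟩ := keyB a b _ _ u1 v1 u3 v3 h1 h3 c1
      exact ⟨p, q, by linear_combination hpq⟩
    by_cases c2 : 1 ≤ u1 + u4
    · obtain ⟨p, q, hpq⟩ := keyA a b _ _ u1 v1 u4 v4 h1 h4 c2
      exact ⟨p, q, by linear_combination hpq⟩
    by_cases c3 : 1 ≤ u2 + u3
    · obtain ⟨p, q, hpq⟩ := keyA a b _ _ u2 v2 u3 v3 h2 h3 c3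
      exact ⟨p, q, by linear_combination hpq⟩
    · exfalso
      -- u1 = v1 = 0 so α = m1; then α - m2 = a - b = v2 * b with u2 = 0
      have hu1 : u1 = 0 := by omega
      have hv1 : v1 = 0 := by omega
      have hu2 : u2 = 0 := by omega
      have hα : α = (b:ℤ) * (a - 1) := by
        rw [hu1, hv1] at h1; push_cast at h1; linarith
      have hd : (a:ℤ) = ((v2 + 1 : ℕ):ℤ) * b := by
        rw [hu2] at h2; rw [hα] at h2; push_cast at h2 ⊢; linarith
      have hdvd : b ∣ a := by
        have : a = (v2 + 1) * b := by exact_mod_cast hd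
        exact ⟨_, by rw [this, Nat.mul_comm]⟩
      have := Nat.Coprime.eq_one_of_dvd hab.symm hdvd
      omega
  · by_cases c1 : 1 ≤ u2 + u4
    · obtain ⟨p, q, hpq⟩ := keyA a b _ _ u2 v2 u4 v4 h2 h4 c1
      exact ⟨p, q, by linear_combination hpq⟩
    by_cases c2 : 1 ≤ v1 + v4
    · obtain ⟨p, q, hpq⟩ := keyB a b _ _ u1 v1 u4 v4 h1 h4 c2
      exact ⟨p, q, by linear_combination hpq⟩
    by_cases c3 : 1 ≤ v2 + v3
    · obtain ⟨p, q, hpq⟩ := keyB a b _ _ u2 v2 u3 v3 h2 h3 c3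
      exact ⟨p, q, by linear_combination hpq⟩
    · exfalso
      have hu2 : u2 = 0 := by omega
      have hv2 : v2 = 0 := by omega
      have hv1 : v1 = 0 := by omega
      have hα : α = (a:ℤ) * (b - 1) := by
        rw [hu2, hv2] at h2; push_cast at h2; linarith
      have hd : (b:ℤ) = ((u1 + 1 : ℕ):ℤ) * a := by
        rw [hv1] at h1; rw [hα] at h1; push_cast at h1 ⊢; linarith
      have hdvd : a ∣ b := by
        have : b = (u1 + 1) * a := by exact_mod_cast hd
        exact ⟨_, by rw [this, Nat.mul_comm]⟩
      have := Nat.Coprime.eq_one_of_dvd hab hdvd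
      omega
end

section
/- The set of integers α such that α - m1 ∈ S, α - m2 ∈ S and α - m1 - m2 ∉ S is equal to the set {a*b + γ : γ ∈ S and γ - (a*b - a - b) ∉ S}. -/
/-- For coprime `a, b ≥ 2`, `m1 = b*(a-1)`, `m2 = a*(b-1)`: the set of integers `α`
with `α - m1 ∈ S`, `α - m2 ∈ S` and `α - m1 - m2 ∉ S` equals
`{a*b + γ : γ ∈ S, γ - (a*b - a - b) ∉ S}`. -/
theorem inter_not_both_description (a b : ℕ) (hab : Nat.Coprime a b)
    (ha : 2 ≤ a) (hb : 2 ≤ b) :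
    {α : ℤ | (∃ u v : ℕ, α - (b : ℤ) * (a - 1) = (u : ℤ) * a + (v : ℤ) * b) ∧
        (∃ u v : ℕ, α - (a : ℤ) * (b - 1) = (u : ℤ) * a + (v : ℤ) * b) ∧
        ¬ ∃ u v : ℕ, α - (b : ℤ) * (a - 1) - (a : ℤ) * (b - 1) =
          (u : ℤ) * a + (v : ℤ) * b} =
      {α : ℤ | ∃ γ : ℤ, (∃ u v : ℕ, γ = (u : ℤ) * a + (v : ℤ) * b) ∧
        (¬ ∃ u v : ℕ, γ - ((a : ℤ) * b - a - b) = (u : ℤ) * a + (v : ℤ) * b) ∧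
        α = (a : ℤ) * b + γ} := by
  ext α
  simp only [Set.mem_setOf_eq]
  constructor
  · rintro ⟨⟨u, v, h1⟩, ⟨u', v', h2⟩, h3⟩
    refine ⟨α - (a : ℤ) * b, ?_, ?_, by ring⟩
    · -- γ ∈ S
      rcases Nat.eq_zero_or_pos v with hv | hv
      · rcases Nat.eq_zero_or_pos u' with hu' | hu'
        · -- γ = u*a - b = v'*b - a, contradiction via h3
          subst hv hu'
          exfalso
          -- (u+1)*a = (v'+1)*b
          have key : ((u : ℤ) + 1) * a = ((v' : ℤ) + 1) * b := by push_cast at h1 h2 ⊢; linarith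
          have keyn : (u + 1) * a = (v' + 1) * b := by exact_mod_cast key
          have hb_dvd : b ∣ u + 1 := (Nat.Coprime.dvd_of_dvd_mul_right
            (Nat.Coprime.symm hab) ⟨v' + 1, by linarith [keyn]⟩)
          obtain ⟨k, hk⟩ := hb_dvd
          have hk1 : 1 ≤ k := Nat.pos_of_ne_zero (by rintro rfl; omega)
          apply h3
          refine ⟨(k - 1) * b, 0, ?_⟩
          have hα : α - (b : ℤ) * (a - 1) = (u : ℤ) * a + 0 * b := h1
      -- α - m1 - m2 = γ - (ab - a - b) = u*a - b - (ab - a - b) + ... compute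
          have hcast : ((u : ℤ) + 1) = (b : ℤ) * k := by exact_mod_cast hk
          have hkpred : ((k - 1 : ℕ) : ℤ) = (k : ℤ) - 1 := by
            have := Nat.cast_sub hk1 (R := ℤ); simpa using this
          push_cast [hkpred]
          push_cast at h1
          nlinarith [hcast, h1]
        · exact ⟨u' - 1, v', by
            have : ((u' - 1 : ℕ) : ℤ) = (u' : ℤ) - 1 := by
              have := Nat.cast_sub hu' (R := ℤ); simpa using this
            rw [this]; push_cast at h2 ⊢; linarith⟩
      · exact ⟨u, v - 1, by
          have : ((v - 1 : ℕ) : ℤ) = (v : ℤ) - 1 := by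
            have := Nat.cast_sub hv (R := ℤ); simpa using this
          rw [this]; push_cast at h1 ⊢; linarith⟩
    · -- γ - (ab - a - b) ∉ S
      rintro ⟨w, x, hw⟩
      exact h3 ⟨w, x, by push_cast at hw ⊢; linarith⟩
  · rintro ⟨γ, ⟨u, v, rfl⟩, hns, rfl⟩
    refine ⟨⟨u, v + 1, by push_cast; ring⟩, ⟨u + 1, v, by push_cast; ring⟩, ?_⟩
    rintro ⟨w, x, hw⟩
    exact hns ⟨w, x, by push_cast at hw ⊢; linarith⟩
end

section
/- Let F be the formal power series in ℤ⟦X⟧ whose n-th coefficient equals 1 if n ∈ S and 0 otherwise. Then (1 - X^a) * (1 - X^b) * F = 1 - X^(a*b) in ℤ⟦X⟧ (this is the Hilbert series identity for the semigroup algebra k[s^a, s^b]). -/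
private lemma sg_add_a {a b n : ℕ} (h : ∃ u v : ℕ, n = u * a + v * b) :
    ∃ u v : ℕ, n + a = u * a + v * b := by
  obtain ⟨u, v, rfl⟩ := h
  exact ⟨u + 1, v, by ring⟩

private lemma sg_add_b {a b n : ℕ} (h : ∃ u v : ℕ, n = u * a + v * b) :
    ∃ u v : ℕ, n + b = u * a + v * b := by
  obtain ⟨u, v, rfl⟩ := h
  exact ⟨u, v + 1, by ring⟩

/-- completeness split: a nonzero element of S is `a` or `b` more than an element of S. -/
private lemma sg_split {a b n : ℕ} (h : ∃ u v : ℕ, n = u * a + v * b) (hn : n ≠ 0) :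
    (∃ m, n = m + a ∧ ∃ u v : ℕ, m = u * a + v * b) ∨
    (∃ m, n = m + b ∧ ∃ u v : ℕ, m = u * a + v * b) := by
  obtain ⟨u, v, rfl⟩ := h
  rcases u with _ | u0
  · rcases v with _ | v0
    · simp at hn
    · exact Or.inr ⟨0 * a + v0 * b, by ring, ⟨0, v0, rfl⟩⟩
  · exact Or.inl ⟨u0 * a + v * b, by ring, ⟨u0, v, rfl⟩⟩

/-- Frobenius number: `a*b - a - b` is not in `S`. -/
private lemma sg_frob {a b : ℕ} (hab : Nat.Coprime a b) (ha : 2 ≤ a) (hb : 2 ≤ b)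
    {m : ℕ} (hm : m + a + b = a * b) : ¬ ∃ u v : ℕ, m = u * a + v * b := by
  rintro ⟨u, v, rfl⟩
  have hmz : (u : ℤ) * a + v * b + a + b = a * b := by exact_mod_cast hm
  have hub : u + 1 ≤ b := by
    by_contra hc
    push_neg at hc
    have : b * a ≤ u * a := Nat.mul_le_mul_right a (by omega)
    nlinarith
  have h2 : a ∣ (v + 1) * b := ⟨b - (u + 1), by zify [hub]; linear_combination hmz⟩
  have h4 : a ∣ v + 1 := hab.dvd_of_dvd_mul_right h2
  have h5 : a ≤ v + 1 := Nat.le_of_dvd (by omega) h4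
  have h6 : a * b ≤ (v + 1) * b := Nat.mul_le_mul_right b h5
  nlinarith

/-- descent: if `m + a ∈ S` and `m + a < b` then `m ∈ S`. -/
private lemma sg_descend_a {a b m : ℕ} (ha : 2 ≤ a)
    (h : ∃ u v : ℕ, m + a = u * a + v * b) (hlt : m + a < b) :
    ∃ u v : ℕ, m = u * a + v * b := by
  obtain ⟨u, v, hu⟩ := h
  rcases v with _ | v0
  · rcases u with _ | u0
    · simp at hu; omega
    · refine ⟨u0, 0, ?_⟩
      have hz : (m : ℤ) + a = (u0 + 1) * a + 0 * b := by exact_mod_cast hu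
      have : (m : ℤ) = u0 * a + 0 * b := by linear_combination hz
      exact_mod_cast this
  · exfalso
    have h7 : b ≤ m + a := by
      calc b ≤ (v0 + 1) * b := Nat.le_mul_of_pos_left b (Nat.succ_pos v0)
        _ ≤ u * a + (v0 + 1) * b := Nat.le_add_left _ _
        _ = m + a := hu.symm
    omega

/-- descent: if `m + b ∈ S` and `m + b < a` then `m ∈ S`. -/
private lemma sg_descend_b {a b m : ℕ} (hb : 2 ≤ b)
    (h : ∃ u v : ℕ, m + b = u * a + v * b) (hlt : m + b < a) :
    ∃ u v : ℕ, m = u * a + v * b := by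
  obtain ⟨u, v, hu⟩ := h
  rcases u with _ | u0
  · rcases v with _ | v0
    · simp at hu; omega
    · refine ⟨0, v0, ?_⟩
      have hz : (m : ℤ) + b = 0 * a + (v0 + 1) * b := by exact_mod_cast hu
      have : (m : ℤ) = 0 * a + v0 * b := by linear_combination hz
      exact_mod_cast this
  · exfalso
    have h7 : a ≤ m + b := by
      calc a ≤ (u0 + 1) * a := Nat.le_mul_of_pos_left a (Nat.succ_pos u0)
        _ ≤ (u0 + 1) * a + v * b := Nat.le_add_right _ _
        _ = m + b := hu.symm
    omega

/-- `n - a` and `n - b` cannot both be in `S` when `n < a + b`. -/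
private lemma sg_not_both {a b p q : ℕ} (hab : Nat.Coprime a b) (ha : 2 ≤ a) (hb : 2 ≤ b)
    (hp : ∃ u v : ℕ, p = u * a + v * b) (hq : ∃ u v : ℕ, q = u * a + v * b)
    (hpq : p + a = q + b) (hlt : p + a < a + b) : False := by
  obtain ⟨u, v, hu⟩ := hp
  obtain ⟨u', v', hv⟩ := hq
  rcases v with _ | v0
  · rcases u' with _ | u0
    · -- p = u*a, q = v'*b
      have hdA : a ∣ p + a := ⟨u + 1, by
        have : (p : ℤ) = u * a + 0 * b := by exact_mod_cast hu
        have h2 : (p : ℤ) + a = a * (u + 1) := by linear_combination this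
        exact_mod_cast h2⟩
      have hdB : b ∣ p + a := by
        rw [hpq]
        exact ⟨v' + 1, by
          have : (q : ℤ) = 0 * a + v' * b := by exact_mod_cast hv
          have h2 : (q : ℤ) + b = b * (v' + 1) := by linear_combination this
          exact_mod_cast h2⟩
      have hdvd : a * b ∣ p + a := Nat.Coprime.mul_dvd_of_dvd_of_dvd hab hdA hdB
      have h8 : a * b ≤ p + a := Nat.le_of_dvd (by omega) hdvd
      nlinarith
    · exfalso
      have h7 : a ≤ q := by
        calc a ≤ (u0 + 1) * a := Nat.le_mul_of_pos_left a (Nat.succ_pos u0)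
          _ ≤ (u0 + 1) * a + v' * b := Nat.le_add_right _ _
          _ = q := hv.symm
      omega
  · exfalso
    have h7 : b ≤ p := by
      calc b ≤ (v0 + 1) * b := Nat.le_mul_of_pos_left b (Nat.succ_pos v0)
        _ ≤ u * a + (v0 + 1) * b := Nat.le_add_left _ _
        _ = p := hu.symm
    omega

/-- key descent step: if `m + a ∈ S`, `m + b ∈ S` and `m + a + b ≠ a*b`, then `m ∈ S`. -/
private lemma sg_step {a b m : ℕ} (hab : Nat.Coprime a b) (ha : 2 ≤ a) (hb : 2 ≤ b)
    (h1 : ∃ u v : ℕ, m + a = u * a + v * b) (h2 : ∃ u v : ℕ, m + b = u * a + v * b)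
    (hne : m + a + b ≠ a * b) : ∃ u v : ℕ, m = u * a + v * b := by
  obtain ⟨u, v, hu⟩ := h1
  rcases u with _ | u0
  · obtain ⟨u', v', hv⟩ := h2
    rcases v' with _ | v0
    · -- m + a = v*b, m + b = u'*a
      have hdA : a ∣ m + a + b := ⟨u' + 1, by
        have : (m : ℤ) + b = u' * a + 0 * b := by exact_mod_cast hv
        have h3 : (m : ℤ) + a + b = a * (u' + 1) := by linear_combination this
        exact_mod_cast h3⟩
      have hdB : b ∣ m + a + b := ⟨v + 1, by
        have : (m : ℤ) + a = 0 * a + v * b := by exact_mod_cast hu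
        have h3 : (m : ℤ) + a + b = b * (v + 1) := by linear_combination this
        exact_mod_cast h3⟩
      obtain ⟨k, hk⟩ := Nat.Coprime.mul_dvd_of_dvd_of_dvd hab hdA hdB
      have hk2 : 2 ≤ k := by
        rcases k with _ | k
        · simp at hk; omega
        · rcases k with _ | k
          · simp at hk; exact absurd hk hne
          · omega
      obtain ⟨k0, rfl⟩ : ∃ k0, k = k0 + 2 := ⟨k - 2, by omega⟩
      obtain ⟨a0, rfl⟩ : ∃ a0, a = a0 + 2 := ⟨a - 2, by omega⟩
      obtain ⟨b0, rfl⟩ : ∃ b0, b = b0 + 2 := ⟨b - 2, by omega⟩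
      refine ⟨(b0 + 1) + k0 * (b0 + 2), a0 + 1, ?_⟩
      have hkz : (m : ℤ) + (a0 + 2) + (b0 + 2) = (a0 + 2) * (b0 + 2) * (k0 + 2) := by
        exact_mod_cast hk
      have : (m : ℤ) = ((b0 + 1) + k0 * (b0 + 2)) * (a0 + 2) + (a0 + 1) * (b0 + 2) := by
        linear_combination hkz
      exact_mod_cast this
    · refine ⟨u', v0, ?_⟩
      have : (m : ℤ) + b = u' * a + (v0 + 1) * b := by exact_mod_cast hv
      have h3 : (m : ℤ) = u' * a + v0 * b := by linear_combination this
      exact_mod_cast h3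
  · refine ⟨u0, v, ?_⟩
    have : (m : ℤ) + a = (u0 + 1) * a + v * b := by exact_mod_cast hu
    have h3 : (m : ℤ) = u0 * a + v * b := by linear_combination this
    exact_mod_cast h3


open Classical in
/-- Hilbert series identity: if `F` is the power series whose `n`-th coefficient is `1`
when `n ∈ S` (the numerical semigroup generated by coprime `a, b ≥ 2`) and `0`
otherwise, then `(1 - X^a) * (1 - X^b) * F = 1 - X^(a*b)` in `ℤ⟦X⟧`. -/
theorem hilbert_series_semigroup_algebra (a b : ℕ) (hab : Nat.Coprime a b)
    (ha : 2 ≤ a) (hb : 2 ≤ b) :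
    (1 - (PowerSeries.X : PowerSeries ℤ) ^ a) * (1 - PowerSeries.X ^ b) *
        PowerSeries.mk (fun n => if ∃ u v : ℕ, n = u * a + v * b then (1 : ℤ) else 0) =
      1 - PowerSeries.X ^ (a * b) := by
  classical
  set F := PowerSeries.mk (fun n => if ∃ u v : ℕ, n = u * a + v * b then (1 : ℤ) else 0)
    with hF
  rw [show (1 - (PowerSeries.X : PowerSeries ℤ) ^ a) * (1 - PowerSeries.X ^ b) * F
      = F - F * PowerSeries.X ^ a - F * PowerSeries.X ^ b + F * PowerSeries.X ^ (a + b)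
    from by ring]
  ext n
  simp only [map_sub, map_add, PowerSeries.coeff_mul_X_pow', hF, PowerSeries.coeff_mk,
    PowerSeries.coeff_one, PowerSeries.coeff_X_pow]
  by_cases h1 : a + b ≤ n
  · obtain ⟨m, rfl⟩ : ∃ m, n = m + a + b := ⟨n - a - b, by omega⟩
    have e1 : m + a + b - a = m + b := by omega
    have e2 : m + a + b - b = m + a := by omega
    have e3 : m + a + b - (a + b) = m := by omega
    rw [if_pos h1, if_pos (show a ≤ m + a + b by omega), if_pos (show b ≤ m + a + b by omega),
      e1, e2, e3, if_neg (show ¬ m + a + b = 0 by omega)]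
    by_cases hc : m + a + b = a * b
    · have hcz : (m : ℤ) + a + b = a * b := by exact_mod_cast hc
      have hPn : ∃ u v : ℕ, m + a + b = u * a + v * b := ⟨b, 0, by rw [hc]; ring⟩
      have hPb : ∃ u v : ℕ, m + b = u * a + v * b := ⟨b - 1, 0, by
        zify [show (1 : ℕ) ≤ b by omega]; linear_combination hcz⟩
      have hPa : ∃ u v : ℕ, m + a = u * a + v * b := ⟨0, a - 1, by
        zify [show (1 : ℕ) ≤ a by omega]; linear_combination hcz⟩
      rw [if_pos hPn, if_pos hPb, if_pos hPa, if_neg (sg_frob hab ha hb hc), if_pos hc]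
      norm_num
    · rw [if_neg hc]
      by_cases hB : ∃ u v : ℕ, m + b = u * a + v * b
      · by_cases hC : ∃ u v : ℕ, m + a = u * a + v * b
        · have hPn : ∃ u v : ℕ, m + a + b = u * a + v * b := sg_add_b hC
          rw [if_pos hPn, if_pos hB, if_pos hC, if_pos (sg_step hab ha hb hC hB hc)]
          norm_num
        · have hPn : ∃ u v : ℕ, m + a + b = u * a + v * b := by
            rw [show m + a + b = m + b + a by omega]; exact sg_add_a hB
          have hPm : ¬ ∃ u v : ℕ, m = u * a + v * b := fun h => hC (sg_add_a h)
          rw [if_pos hPn, if_pos hB, if_neg hC, if_neg hPm]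
          norm_num
      · by_cases hC : ∃ u v : ℕ, m + a = u * a + v * b
        · have hPn : ∃ u v : ℕ, m + a + b = u * a + v * b := sg_add_b hC
          have hPm : ¬ ∃ u v : ℕ, m = u * a + v * b := fun h => hB (sg_add_b h)
          rw [if_pos hPn, if_neg hB, if_pos hC, if_neg hPm]
          norm_num
        · have hPn : ¬ ∃ u v : ℕ, m + a + b = u * a + v * b := by
            intro h
            rcases sg_split h (by omega) with ⟨m', hm', hP⟩ | ⟨m', hm', hP⟩
            · exact hB (by rw [show m + b = m' by omega]; exact hP)
            · exact hC (by rw [show m + a = m' by omega]; exact hP)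
          have hPm : ¬ ∃ u v : ℕ, m = u * a + v * b := fun h => hC (sg_add_a h)
          rw [if_neg hPn, if_neg hB, if_neg hC, if_neg hPm]
          norm_num
  · rw [if_neg h1]
    by_cases h2 : a ≤ n
    · by_cases h3 : b ≤ n
      · -- a ≤ n, b ≤ n, n < a + b
        have hnab : ¬ n = a * b := by
          intro h
          have h4 : a + b ≤ a * b := by nlinarith
          omega
        rw [if_pos h2, if_pos h3, if_neg (show ¬ n = 0 by omega), if_neg hnab]
        by_cases hB : ∃ u v : ℕ, n - a = u * a + v * b
        · by_cases hC : ∃ u v : ℕ, n - b = u * a + v * b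
          · exact (sg_not_both hab ha hb hB hC (by omega) (by omega)).elim
          · have hPn : ∃ u v : ℕ, n = u * a + v * b := by
              have := sg_add_a hB
              rwa [show n - a + a = n by omega] at this
            rw [if_pos hPn, if_pos hB, if_neg hC]
            norm_num
        · by_cases hC : ∃ u v : ℕ, n - b = u * a + v * b
          · have hPn : ∃ u v : ℕ, n = u * a + v * b := by
              have := sg_add_b hC
              rwa [show n - b + b = n by omega] at this
            rw [if_pos hPn, if_neg hB, if_pos hC]
            norm_num
          · have hPn : ¬ ∃ u v : ℕ, n = u * a + v * b := by
              intro h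
              rcases sg_split h (by omega) with ⟨m', hm', hP⟩ | ⟨m', hm', hP⟩
              · exact hB (by rw [show n - a = m' by omega]; exact hP)
              · exact hC (by rw [show n - b = m' by omega]; exact hP)
            rw [if_neg hPn, if_neg hB, if_neg hC]
            norm_num
      · -- a ≤ n < b
        have hnab : ¬ n = a * b := by
          intro h
          have h4 : 2 * b ≤ n := h ▸ Nat.mul_le_mul_right b ha
          omega
        rw [if_pos h2, if_neg h3, if_neg (show ¬ n = 0 by omega), if_neg hnab]
        by_cases hB : ∃ u v : ℕ, n - a = u * a + v * b
        · have hPn : ∃ u v : ℕ, n = u * a + v * b := by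
            have := sg_add_a hB
            rwa [show n - a + a = n by omega] at this
          rw [if_pos hPn, if_pos hB]
          norm_num
        · have hPn : ¬ ∃ u v : ℕ, n = u * a + v * b := by
            intro h
            rcases sg_split h (by omega) with ⟨m', hm', hP⟩ | ⟨m', hm', hP⟩
            · exact hB (by rw [show n - a = m' by omega]; exact hP)
            · omega
          rw [if_neg hPn, if_neg hB]
          norm_num
    · by_cases h3 : b ≤ n
      · -- b ≤ n < a
        have hnab : ¬ n = a * b := by
          intro h
          have h4 : a * 2 ≤ n := h ▸ Nat.mul_le_mul_left a hb
          omega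
        rw [if_neg h2, if_pos h3, if_neg (show ¬ n = 0 by omega), if_neg hnab]
        by_cases hC : ∃ u v : ℕ, n - b = u * a + v * b
        · have hPn : ∃ u v : ℕ, n = u * a + v * b := by
            have := sg_add_b hC
            rwa [show n - b + b = n by omega] at this
          rw [if_pos hPn, if_pos hC]
          norm_num
        · have hPn : ¬ ∃ u v : ℕ, n = u * a + v * b := by
            intro h
            rcases sg_split h (by omega) with ⟨m', hm', hP⟩ | ⟨m', hm', hP⟩
            · omega
            · exact hC (by rw [show n - b = m' by omega]; exact hP)
          rw [if_neg hPn, if_neg hC]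
          norm_num
      · -- n < a, n < b
        rw [if_neg h2, if_neg h3]
        by_cases h0 : n = 0
        · subst h0
          have hnab : ¬ (0 : ℕ) = a * b := by
            intro h
            exact absurd h.symm (Nat.mul_pos (by omega) (by omega)).ne'
          rw [if_pos ⟨0, 0, by simp⟩, if_pos rfl, if_neg hnab]
          norm_num
        · have hnab : ¬ n = a * b := by
            intro h
            have h4 : a ≤ n := h ▸ Nat.le_mul_of_pos_right a (by omega)
            omega
          have hPn : ¬ ∃ u v : ℕ, n = u * a + v * b := by
            intro h
            rcases sg_split h h0 with ⟨m', hm', hP⟩ | ⟨m', hm', hP⟩ <;> omega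
          rw [if_neg hPn, if_neg h0, if_neg hnab]
          norm_num
end

section
/- Let F be the formal power series in ℤ⟦X⟧ whose n-th coefficient equals 1 if n ∈ S and 0 otherwise, and let G be the formal power series whose n-th coefficient equals 1 if both n - m1 ∈ S and n - m2 ∈ S, and 0 otherwise. Then G = X^(m1 + m2) + X^(a*b) * F in ℤ⟦X⟧. -/
/-- The Frobenius number `ab - a - b` is not representable. -/
lemma frob_not_rep (a b : ℕ) (hab : Nat.Coprime a b) (ha : 2 ≤ a) (hb : 2 ≤ b) :
    ¬ ∃ u v : ℕ, (a:ℤ)*b - a - b = (u:ℤ)*a + (v:ℤ)*b := by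
  rintro ⟨u, v, h⟩
  have hN : a*b = (u+1)*a + (v+1)*b := by
    have : ((a*b : ℕ):ℤ) = (((u+1)*a + (v+1)*b : ℕ):ℤ) := by push_cast; linarith
    exact_mod_cast this
  have hb1 : b ∣ (u+1)*a := by
    have e : (u+1)*a = a*b - (v+1)*b := by omega
    rw [e]; exact Nat.dvd_sub (dvd_mul_left b a) (dvd_mul_left b (v+1))
  have hbu : b ∣ u+1 := Nat.Coprime.dvd_of_dvd_mul_right hab.symm hb1
  have ha1 : a ∣ (v+1)*b := by
    have e : (v+1)*b = a*b - (u+1)*a := by omega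
    rw [e]; exact Nat.dvd_sub (dvd_mul_right a b) (dvd_mul_left a (u+1))
  have hav : a ∣ v+1 := Nat.Coprime.dvd_of_dvd_mul_right hab ha1
  have h1 : b ≤ u+1 := Nat.le_of_dvd (by omega) hbu
  have h2 : a ≤ v+1 := Nat.le_of_dvd (by omega) hav
  nlinarith [Nat.mul_le_mul_right a h1, Nat.mul_le_mul_right b h2]

/-- Key arithmetic lemma: `k+b ∈ S ∧ k+a ∈ S ↔ k ∈ S ∨ k = ab-a-b`. -/
lemma key_lemma (a b : ℕ) (hab : Nat.Coprime a b) (ha : 2 ≤ a) (hb : 2 ≤ b) (k : ℤ) :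
    ((∃ u v : ℕ, k + b = (u:ℤ)*a + (v:ℤ)*b) ∧ (∃ u v : ℕ, k + a = (u:ℤ)*a + (v:ℤ)*b)) ↔
    ((∃ u v : ℕ, k = (u:ℤ)*a + (v:ℤ)*b) ∨ k = (a:ℤ)*b - a - b) := by
  constructor
  · rintro ⟨⟨u1, v1, h1⟩, ⟨u2, v2, h2⟩⟩
    by_cases hS : ∃ u v : ℕ, k = (u:ℤ)*a + (v:ℤ)*b
    · exact Or.inl hS
    right
    have hv1 : v1 = 0 := by
      by_contra h
      refine hS ⟨u1, v1 - 1, ?_⟩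
      rw [Nat.cast_sub (by omega : 1 ≤ v1)]
      push_cast
      linarith
    have hu2 : u2 = 0 := by
      by_contra h
      refine hS ⟨u2 - 1, v2, ?_⟩
      rw [Nat.cast_sub (by omega : 1 ≤ u2)]
      push_cast
      linarith
    subst hv1; subst hu2
    push_cast at h1 h2
    -- k = u1*a - b = v2*b - a, hence a*(u1+1) = b*(v2+1)
    have heq : a*(u1+1) = b*(v2+1) := by
      have : ((a*(u1+1) : ℕ):ℤ) = ((b*(v2+1) : ℕ):ℤ) := by push_cast; linarith
      exact_mod_cast this
    have hdvd : a ∣ v2 + 1 := by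
      refine Nat.Coprime.dvd_of_dvd_mul_right hab ⟨u1+1, ?_⟩
      rw [mul_comm]; exact heq.symm
    obtain ⟨t, ht⟩ := hdvd
    have ht1 : 1 ≤ t := by nlinarith
    have hv2 : (v2:ℤ) = (a:ℤ)*t - 1 := by
      have h' : (v2:ℤ) + 1 = (a:ℤ)*t := by exact_mod_cast ht
      linarith
    by_cases ht2 : 2 ≤ t
    · exfalso
      refine hS ⟨b*(t-1) - 1, a - 1, ?_⟩
      have hc1 : ((b*(t-1) - 1 : ℕ):ℤ) = (b:ℤ)*((t:ℤ)-1) - 1 := by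
        rw [Nat.cast_sub (Nat.mul_pos (by omega) (by omega : 0 < t - 1))]
        rw [Nat.cast_mul, Nat.cast_sub (by omega : 1 ≤ t)]
        push_cast; ring
      have hc2 : ((a - 1 : ℕ):ℤ) = (a:ℤ) - 1 := by
        rw [Nat.cast_sub (by omega : 1 ≤ a)]; push_cast; ring
      rw [hc1, hc2]
      have hk : k = (v2:ℤ)*b - a := by linarith
      rw [hk, hv2]; ring
    · have ht' : t = 1 := by omega
      have hk : k = (v2:ℤ)*b - a := by linarith
      rw [hk, hv2, ht']; push_cast; ring
  · rintro (⟨u, v, h⟩ | h)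
    · exact ⟨⟨u, v+1, by push_cast; linarith⟩, ⟨u+1, v, by push_cast; linarith⟩⟩
    · constructor
      · refine ⟨b-1, 0, ?_⟩
        rw [Nat.cast_sub (by omega : 1 ≤ b)]
        push_cast; linarith
      · refine ⟨0, a-1, ?_⟩
        rw [Nat.cast_sub (by omega : 1 ≤ a)]
        push_cast; linarith
open Classical in
/-- With `m1 = b*(a-1)`, `m2 = a*(b-1)`: if `F` is the power series whose `n`-th
coefficient is `1` when `n ∈ S` and `0` otherwise, and `G` the power series whose
`n`-th coefficient is `1` when `n - m1 ∈ S` and `n - m2 ∈ S` and `0` otherwise, then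
`G = X^(m1+m2) + X^(a*b) * F` in `ℤ⟦X⟧`. -/
theorem hilbert_series_intersection (a b : ℕ) (hab : Nat.Coprime a b)
    (ha : 2 ≤ a) (hb : 2 ≤ b) :
    (PowerSeries.mk (fun n =>
        if (∃ u v : ℕ, (n : ℤ) - (b : ℤ) * (a - 1) = (u : ℤ) * a + (v : ℤ) * b) ∧
           (∃ u v : ℕ, (n : ℤ) - (a : ℤ) * (b - 1) = (u : ℤ) * a + (v : ℤ) * b)
        then (1 : ℤ) else 0) : PowerSeries ℤ) =
      PowerSeries.X ^ (b * (a - 1) + a * (b - 1)) +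
        PowerSeries.X ^ (a * b) *
          PowerSeries.mk (fun n => if ∃ u v : ℕ, n = u * a + v * b then (1 : ℤ) else 0) := by
  ext n
  rw [PowerSeries.coeff_mk, map_add, PowerSeries.coeff_X_pow, PowerSeries.coeff_X_pow_mul',
    PowerSeries.coeff_mk]
  -- The condition on the left in terms of k = n - a*b
  have hkey := key_lemma a b hab ha hb ((n:ℤ) - a*b)
  have c1 : (∃ u v : ℕ, (n:ℤ) - (b:ℤ) * ((a:ℤ) - 1) = (u:ℤ)*a + (v:ℤ)*b) ↔
      (∃ u v : ℕ, (n:ℤ) - a*b + b = (u:ℤ)*a + (v:ℤ)*b) := by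
    constructor <;> rintro ⟨u, v, h⟩ <;> exact ⟨u, v, by linarith⟩
  have c2 : (∃ u v : ℕ, (n:ℤ) - (a:ℤ) * ((b:ℤ) - 1) = (u:ℤ)*a + (v:ℤ)*b) ↔
      (∃ u v : ℕ, (n:ℤ) - a*b + a = (u:ℤ)*a + (v:ℤ)*b) := by
    constructor <;> rintro ⟨u, v, h⟩ <;> exact ⟨u, v, by linarith⟩
  have hMcast : ((b*(a-1) + a*(b-1) : ℕ):ℤ) = 2*((a:ℤ)*b) - a - b := by
    push_cast [Nat.cast_sub (show 1 ≤ a by omega), Nat.cast_sub (show 1 ≤ b by omega)]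
    ring
  by_cases hF : (n:ℤ) - a*b = (a:ℤ)*b - a - b
  · -- n = m1 + m2 case
    have hn : n = b*(a-1) + a*(b-1) := by
      have : (n:ℤ) = ((b*(a-1) + a*(b-1) : ℕ):ℤ) := by rw [hMcast]; linarith
      exact_mod_cast this
    have hL : (∃ u v : ℕ, (n:ℤ) - (b:ℤ) * ((a:ℤ) - 1) = (u:ℤ)*a + (v:ℤ)*b) ∧
        (∃ u v : ℕ, (n:ℤ) - (a:ℤ) * ((b:ℤ) - 1) = (u:ℤ)*a + (v:ℤ)*b) := by
      rw [c1, c2]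
      exact hkey.mpr (Or.inr hF)
    have hR2 : (if a*b ≤ n then (if ∃ u v : ℕ, n - a*b = u*a + v*b then (1:ℤ) else 0) else 0)
        = 0 := by
      split_ifs with h h'
      · exfalso
        obtain ⟨u, v, hr⟩ := h'
        refine frob_not_rep a b hab ha hb ⟨u, v, ?_⟩
        rw [← hF]
        have : ((n - a*b : ℕ):ℤ) = ((u*a + v*b : ℕ):ℤ) := by exact_mod_cast hr
        rw [Nat.cast_sub h] at this
        push_cast at this
        push_cast
        linarith
      · rfl
      · rfl
    rw [hR2, if_pos hL, if_pos hn]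
    ring
  · by_cases hS : ∃ u v : ℕ, (n:ℤ) - a*b = (u:ℤ)*a + (v:ℤ)*b
    · -- n - a*b ∈ S case
      have hL : (∃ u v : ℕ, (n:ℤ) - (b:ℤ) * ((a:ℤ) - 1) = (u:ℤ)*a + (v:ℤ)*b) ∧
          (∃ u v : ℕ, (n:ℤ) - (a:ℤ) * ((b:ℤ) - 1) = (u:ℤ)*a + (v:ℤ)*b) := by
        rw [c1, c2]
        exact hkey.mpr (Or.inl hS)
      obtain ⟨u, v, hr⟩ := hS
      have hle : a*b ≤ n := by
        have h0 : (0:ℤ) ≤ (u:ℤ)*a + (v:ℤ)*b := by positivity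
        have : ((a*b : ℕ):ℤ) ≤ (n:ℤ) := by push_cast; linarith
        exact_mod_cast this
      have hrep : ∃ u v : ℕ, n - a*b = u*a + v*b := by
        refine ⟨u, v, ?_⟩
        have : ((n - a*b : ℕ):ℤ) = ((u*a + v*b : ℕ):ℤ) := by
          rw [Nat.cast_sub hle]; push_cast; linarith
        exact_mod_cast this
      have hn : n ≠ b*(a-1) + a*(b-1) := by
        intro h
        apply hF
        rw [h] at hr ⊢
        rw [hMcast]; ring
      rw [if_pos hL, if_neg hn, if_pos hle, if_pos hrep]
      ring
    · -- neither
      have hL : ¬((∃ u v : ℕ, (n:ℤ) - (b:ℤ) * ((a:ℤ) - 1) = (u:ℤ)*a + (v:ℤ)*b) ∧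
          (∃ u v : ℕ, (n:ℤ) - (a:ℤ) * ((b:ℤ) - 1) = (u:ℤ)*a + (v:ℤ)*b)) := by
        rw [c1, c2, hkey]
        rintro (h | h)
        exacts [hS h, hF h]
      have hn : n ≠ b*(a-1) + a*(b-1) := by
        intro h
        apply hF
        rw [h, hMcast]
        have : ((b*(a-1) + a*(b-1) : ℕ):ℤ) = 2*((a:ℤ)*b) - a - b := hMcast
        linarith [this]
      have hR2 : (if a*b ≤ n then (if ∃ u v : ℕ, n - a*b = u*a + v*b then (1:ℤ) else 0) else 0)
          = 0 := by
        split_ifs with h h'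
        · exfalso
          obtain ⟨u, v, hr⟩ := h'
          refine hS ⟨u, v, ?_⟩
          have : ((n - a*b : ℕ):ℤ) = ((u*a + v*b : ℕ):ℤ) := by exact_mod_cast hr
          rw [Nat.cast_sub h] at this
          push_cast at this
          linarith
        · rfl
        · rfl
      rw [hR2, if_neg hL, if_neg hn]
      ring
end

section
/- In the quotient R = k[X1, X2, Y1, Y2, T]/I of the commutative polynomial ring in five variables by the ideal I generated by X1^b - X2^a, X1^(b-1)*T, X2^(a-1)*T, Y2*T, Y1^2, Y2^2, Y1*Y2, X1*Y2 - X2^(a-1)*Y1 and X2*Y2 - X1^(b-1)*Y1, the residue classes of the following monomials form a k-basis of R: X1^u*X2^v with u ∈ ℕ and 0 ≤ v ≤ a-1; X1^u*X2^v*T^q with 0 ≤ u ≤ b-2, 0 ≤ v ≤ a-2 and q ≥ 1; X1^u*X2^v*Y1 with u ∈ ℕ and 0 ≤ v ≤ a-1; X1^u*X2^v*Y1*T^q with 0 ≤ u ≤ b-2, 0 ≤ v ≤ a-2 and q ≥ 1; and Y2. -/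
open MvPolynomial

namespace HCCI

abbrev Idx (a b : ℕ) :=
  (ℕ × Fin a) ⊕ (Fin (b - 1) × Fin (a - 1) × {q : ℕ // 1 ≤ q}) ⊕
    (ℕ × Fin a) ⊕ (Fin (b - 1) × Fin (a - 1) × {q : ℕ // 1 ≤ q}) ⊕ Unit

def red (a b : ℕ) (ha : 2 ≤ a) (P : ℕ × Fin a → Idx a b)
    (T : Fin (b - 1) × Fin (a - 1) × {q : ℕ // 1 ≤ q} → Idx a b) (u v q : ℕ) :
    Option (Idx a b) :=
  if hq : q = 0 then
    some (P (u + b * (v / a), ⟨v % a, Nat.mod_lt _ (by omega)⟩))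
  else if h : u < b - 1 ∧ v < a - 1 then
    some (T (⟨u, h.1⟩, ⟨v, h.2⟩, ⟨q, by omega⟩))
  else none

def inP {a b : ℕ} : ℕ × Fin a → Idx a b := Sum.inl
def inPT {a b : ℕ} : Fin (b - 1) × Fin (a - 1) × {q : ℕ // 1 ≤ q} → Idx a b :=
  fun p => Sum.inr (Sum.inl p)
def inY {a b : ℕ} : ℕ × Fin a → Idx a b := fun p => Sum.inr (Sum.inr (Sum.inl p))
def inYT {a b : ℕ} : Fin (b - 1) × Fin (a - 1) × {q : ℕ // 1 ≤ q} → Idx a b :=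
  fun p => Sum.inr (Sum.inr (Sum.inr (Sum.inl p)))
def inZ {a b : ℕ} : Idx a b := Sum.inr (Sum.inr (Sum.inr (Sum.inr ())))

def nf (a b : ℕ) (ha : 2 ≤ a) (u v c d q : ℕ) : Option (Idx a b) :=
  match c, d with
  | 0, 0 => red a b ha inP inPT u v q
  | 1, 0 => red a b ha inY inYT u v q
  | 0, 1 =>
    if q = 0 then
      if u = 0 then
        if v = 0 then some inZ
        else red a b ha inY inYT (b - 1) (v - 1) 0
      else red a b ha inY inYT (u - 1) (v + (a - 1)) 0
    else none
  | _, _ => none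

noncomputable def rep (a b : ℕ) (k : Type*) [Field k] : Idx a b → MvPolynomial (Fin 5) k :=
  Sum.elim (fun p => X 0 ^ p.1 * X 1 ^ (p.2 : ℕ))
    (Sum.elim (fun p => X 0 ^ (p.1 : ℕ) * X 1 ^ (p.2.1 : ℕ) * X 4 ^ (p.2.2 : ℕ))
      (Sum.elim (fun p => X 0 ^ p.1 * X 1 ^ (p.2 : ℕ) * X 2)
        (Sum.elim (fun p => X 0 ^ (p.1 : ℕ) * X 1 ^ (p.2.1 : ℕ) * X 2 * X 4 ^ (p.2.2 : ℕ))
          (fun _ => X 3))))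

section NFLemmas

variable {a b : ℕ} (ha : 2 ≤ a) (hb : 2 ≤ b)

lemma nfP (u v q : ℕ) : nf a b ha u v 0 0 q = red a b ha inP inPT u v q := rfl

lemma nfY (u v q : ℕ) : nf a b ha u v 1 0 q = red a b ha inY inYT u v q := rfl

lemma nfY2 (u v q : ℕ) : nf a b ha u v 0 1 q =
    (if q = 0 then
      if u = 0 then
        if v = 0 then some inZ
        else red a b ha inY inYT (b - 1) (v - 1) 0
      else red a b ha inY inYT (u - 1) (v + (a - 1)) 0
    else none) := rfl

lemma red_shift (P T) (u v q : ℕ) :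
    red a b ha P T (u + b) v q = red a b ha P T u (v + a) q := by
  unfold red
  by_cases hq : q = 0
  · rw [dif_pos hq, dif_pos hq]
    have e1 : (v + a) / a = v / a + 1 := Nat.add_div_right v (by omega)
    have e2 : (v + a) % a = v % a := Nat.add_mod_right v a
    have e3 : u + b * ((v + a) / a) = u + b + b * (v / a) := by rw [e1]; ring
    simp only [e2, e3]
  · rw [dif_neg hq, dif_neg hq, dif_neg (by omega), dif_neg (by omega)]

lemma red_none_u (P T) (u v q : ℕ) (hq : q ≠ 0) :
    red a b ha P T (u + (b - 1)) v q = none := by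
  unfold red
  rw [dif_neg hq, dif_neg (by omega)]

lemma red_none_v (P T) (u v q : ℕ) (hq : q ≠ 0) :
    red a b ha P T u (v + (a - 1)) q = none := by
  unfold red
  rw [dif_neg hq, dif_neg (by omega)]

lemma nf1 (hb : 2 ≤ b) (u v c d q : ℕ) :
    nf a b ha (u + b) v c d q = nf a b ha u (v + a) c d q := by
  match c, d with
  | 0, 0 => exact red_shift ha _ _ u v q
  | 1, 0 => exact red_shift ha _ _ u v q
  | 0, 1 =>
    rw [nfY2, nfY2]
    by_cases hq : q = 0
    · rw [if_pos hq, if_pos hq, if_neg (by omega)]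
      rcases Nat.eq_zero_or_pos u with rfl | hu
      · rw [if_pos rfl, if_neg (by omega)]
        have e1 : 0 + b - 1 = b - 1 := by omega
        have e2 : v + (a - 1) = v + a - 1 := by omega
        rw [e1, e2]
      · rw [if_neg (by omega)]
        have e1 : u + b - 1 = (u - 1) + b := by omega
        have e2 : (v + a) + (a - 1) = (v + (a - 1)) + a := by omega
        rw [e1, e2, red_shift ha]
    · rw [if_neg hq, if_neg hq]
  | 0, d + 2 => rfl
  | 1, d + 1 => rfl
  | c + 2, d => rfl

lemma nf2 (u v c d q : ℕ) (hq : q ≠ 0) :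
    nf a b ha (u + (b - 1)) v c d q = none := by
  match c, d with
  | 0, 0 => exact red_none_u ha _ _ u v q hq
  | 1, 0 => exact red_none_u ha _ _ u v q hq
  | 0, 1 => rw [nfY2, if_neg hq]
  | 0, d + 2 => rfl
  | 1, d + 1 => rfl
  | c + 2, d => rfl

lemma nf3 (u v c d q : ℕ) (hq : q ≠ 0) :
    nf a b ha u (v + (a - 1)) c d q = none := by
  match c, d with
  | 0, 0 => exact red_none_v ha _ _ u v q hq
  | 1, 0 => exact red_none_v ha _ _ u v q hq
  | 0, 1 => rw [nfY2, if_neg hq]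
  | 0, d + 2 => rfl
  | 1, d + 1 => rfl
  | c + 2, d => rfl

lemma nf4 (u v c d q : ℕ) (hq : q ≠ 0) :
    nf a b ha u v c (d + 1) q = none := by
  match c, d with
  | 0, 0 => rw [nfY2, if_neg hq]
  | 1, d => rfl
  | 0, d + 1 => rfl
  | c + 2, d => rfl

lemma nf5 (u v c d q : ℕ) : nf a b ha u v (c + 2) d q = none := rfl

lemma nf6 (u v c d q : ℕ) : nf a b ha u v c (d + 2) q = none := by
  match c with
  | 0 => rfl
  | 1 => rfl
  | c + 2 => rfl

lemma nf7 (u v c d q : ℕ) : nf a b ha u v (c + 1) (d + 1) q = none := by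
  match c with
  | 0 => rfl
  | c + 1 => rfl

lemma nf8 (u v c d q : ℕ) :
    nf a b ha (u + 1) v c (d + 1) q = nf a b ha u (v + (a - 1)) (c + 1) d q := by
  match c, d with
  | 0, 0 =>
    rw [nfY2, nfY]
    by_cases hq : q = 0
    · rw [if_pos hq, if_neg (by omega)]
      subst hq
      simp
    · rw [if_neg hq, red_none_v ha _ _ u v q hq]
  | 0, d + 1 => rfl
  | 1, d => rfl
  | c + 2, d => rfl

lemma nf9 (hb : 2 ≤ b) (u v c d q : ℕ) :
    nf a b ha u (v + 1) c (d + 1) q = nf a b ha (u + (b - 1)) v (c + 1) d q := by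
  match c, d with
  | 0, 0 =>
    rw [nfY2, nfY]
    by_cases hq : q = 0
    · subst hq
      rw [if_pos rfl]
      rcases Nat.eq_zero_or_pos u with rfl | hu
      · rw [if_pos rfl, if_neg (by omega)]
        simp
      · rw [if_neg (by omega)]
        have e1 : u + (b - 1) = (u - 1) + b := by omega
        have e2 : v + 1 + (a - 1) = v + a := by omega
        rw [e1, red_shift ha, e2]
    · rw [if_neg hq, red_none_u ha _ _ u v q hq]
  | 0, d + 1 => rfl
  | 1, d => rfl
  | c + 2, d => rfl

end NFLemmas

section SelfLemmas

variable {a b : ℕ} (ha : 2 ≤ a) (hb : 2 ≤ b)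

lemma red_self_q0 (P T) (u : ℕ) (v : Fin a) :
    red a b ha P T u (v : ℕ) 0 = some (P (u, v)) := by
  unfold red
  rw [dif_pos rfl]
  simp [Nat.div_eq_of_lt v.isLt, Nat.mod_eq_of_lt v.isLt]

lemma red_self_T (P T) (u : Fin (b - 1)) (v : Fin (a - 1)) (q : {q : ℕ // 1 ≤ q}) :
    red a b ha P T (u : ℕ) (v : ℕ) (q : ℕ) = some (T (u, v, q)) := by
  unfold red
  rw [dif_neg (by have := q.2; omega), dif_pos ⟨u.isLt, v.isLt⟩]

lemma nf_self (i : Idx a b) :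
    (match i with
      | Sum.inl p => nf a b ha p.1 (p.2 : ℕ) 0 0 0
      | Sum.inr (Sum.inl p) => nf a b ha (p.1 : ℕ) (p.2.1 : ℕ) 0 0 (p.2.2 : ℕ)
      | Sum.inr (Sum.inr (Sum.inl p)) => nf a b ha p.1 (p.2 : ℕ) 1 0 0
      | Sum.inr (Sum.inr (Sum.inr (Sum.inl p))) =>
          nf a b ha (p.1 : ℕ) (p.2.1 : ℕ) 1 0 (p.2.2 : ℕ)
      | Sum.inr (Sum.inr (Sum.inr (Sum.inr _))) => nf a b ha 0 0 0 1 0) = some i := by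
  rcases i with p | p | p | p | u
  · exact red_self_q0 ha _ _ p.1 p.2
  · show nf a b ha (p.1 : ℕ) (p.2.1 : ℕ) 0 0 (p.2.2 : ℕ) = _
    rw [nfP, red_self_T ha _ _ p.1 p.2.1 p.2.2]; rfl
  · exact red_self_q0 ha _ _ p.1 p.2
  · show nf a b ha (p.1 : ℕ) (p.2.1 : ℕ) 1 0 (p.2.2 : ℕ) = _
    rw [nfY, red_self_T ha _ _ p.1 p.2.1 p.2.2]; rfl
  · rfl

end SelfLemmas

section NFMap

variable (k : Type*) [Field k] (a b : ℕ) (ha : 2 ≤ a)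

noncomputable def h0 (e : Fin 5 →₀ ℕ) : Idx a b →₀ k :=
  (nf a b ha (e 0) (e 1) (e 2) (e 3) (e 4)).elim 0 fun i => Finsupp.single i 1

noncomputable def NF : MvPolynomial (Fin 5) k →ₗ[k] (Idx a b →₀ k) :=
  (Finsupp.linearCombination k (h0 k a b ha)).comp
    (MvPolynomial.basisMonomials (Fin 5) k).repr.toLinearMap

lemma NF_monomial (e : Fin 5 →₀ ℕ) (r : k) :
    NF k a b ha (monomial e r) = r • h0 k a b ha e := by
  have h1 : (monomial e r : MvPolynomial (Fin 5) k) =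
      r • (MvPolynomial.basisMonomials (Fin 5) k) e := by
    have := congrFun (MvPolynomial.coe_basisMonomials (Fin 5) k) e
    rw [this, smul_monomial, smul_eq_mul, mul_one]
  rw [NF, LinearMap.comp_apply, LinearEquiv.coe_toLinearMap, h1, map_smul,
    Module.Basis.repr_self, map_smul, Finsupp.linearCombination_single, one_smul]

lemma NF_mul_mono (e s : Fin 5 →₀ ℕ) (r : k)
    (h : nf a b ha ((e + s) 0) ((e + s) 1) ((e + s) 2) ((e + s) 3) ((e + s) 4) = none) :
    NF k a b ha (monomial e r * monomial s 1) = 0 := by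
  rw [monomial_mul, mul_one, NF_monomial, h0, h, Option.elim, smul_zero]

lemma NF_mul_sub (e s t : Fin 5 →₀ ℕ) (r : k)
    (h : nf a b ha ((e + s) 0) ((e + s) 1) ((e + s) 2) ((e + s) 3) ((e + s) 4) =
      nf a b ha ((e + t) 0) ((e + t) 1) ((e + t) 2) ((e + t) 3) ((e + t) 4)) :
    NF k a b ha (monomial e r * (monomial s 1 - monomial t 1)) = 0 := by
  rw [mul_sub, monomial_mul, monomial_mul, mul_one, map_sub, NF_monomial, NF_monomial,
    h0, h0, h, sub_self]

end NFMap

section Kill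

variable (k : Type*) [Field k] (a b : ℕ) (ha : 2 ≤ a) (hb : 2 ≤ b)

lemma NF_mul_all (g : MvPolynomial (Fin 5) k)
    (h : ∀ e r, NF k a b ha (monomial e r * g) = 0) :
    ∀ p, NF k a b ha (p * g) = 0 := by
  intro p
  induction p using MvPolynomial.induction_on' with
  | monomial e r => exact h e r
  | add p q hp hq => rw [add_mul, map_add, hp, hq, add_zero]

lemma X_mul_X (i j : Fin 5) (m n : ℕ) :
    (X i : MvPolynomial (Fin 5) k) ^ m * X j ^ n =
      monomial (Finsupp.single i m + Finsupp.single j n) 1 := by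
  rw [X_pow_eq_monomial, X_pow_eq_monomial, monomial_mul, one_mul]

lemma NF_span (hb : 2 ≤ b) :
    ∀ x ∈ Ideal.span ({X 0 ^ b - X 1 ^ a, X 0 ^ (b - 1) * X 4, X 1 ^ (a - 1) * X 4,
        X 3 * X 4, X 2 ^ 2, X 3 ^ 2, X 2 * X 3,
        X 0 * X 3 - X 1 ^ (a - 1) * X 2, X 1 * X 3 - X 0 ^ (b - 1) * X 2} :
        Set (MvPolynomial (Fin 5) k)),
      NF k a b ha x = 0 := by
  suffices H : ∀ x ∈ Ideal.span ({X 0 ^ b - X 1 ^ a, X 0 ^ (b - 1) * X 4,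
      X 1 ^ (a - 1) * X 4, X 3 * X 4, X 2 ^ 2, X 3 ^ 2, X 2 * X 3,
      X 0 * X 3 - X 1 ^ (a - 1) * X 2, X 1 * X 3 - X 0 ^ (b - 1) * X 2} :
      Set (MvPolynomial (Fin 5) k)), ∀ p, NF k a b ha (p * x) = 0 by
    intro x hx
    simpa using H x hx 1
  intro x hx
  refine Submodule.span_induction ?_ ?_ ?_ ?_ hx
  · intro g hg
    simp only [Set.mem_insert_iff, Set.mem_singleton_iff] at hg
    rcases hg with rfl | rfl | rfl | rfl | rfl | rfl | rfl | rfl | rfl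
    · refine NF_mul_all k a b ha _ (fun e r => ?_)
      rw [X_pow_eq_monomial, X_pow_eq_monomial]
      refine NF_mul_sub k a b ha _ _ _ r ?_
      simp only [Finsupp.add_apply, Finsupp.single_apply]
      simp only [show ((0:Fin 5) = 0) = True by simp, show ((0:Fin 5) = 1) = False by simp,
        show ((0:Fin 5) = 2) = False by simp, show ((0:Fin 5) = 3) = False by simp,
        show ((0:Fin 5) = 4) = False by simp, show ((1:Fin 5) = 0) = False by simp,
        show ((1:Fin 5) = 1) = True by simp, show ((1:Fin 5) = 2) = False by simp,
        show ((1:Fin 5) = 3) = False by simp, show ((1:Fin 5) = 4) = False by simp,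
        if_true, if_false, add_zero]
      exact nf1 ha hb _ _ _ _ _
    · refine NF_mul_all k a b ha _ (fun e r => ?_)
      rw [show (X 0 : MvPolynomial (Fin 5) k) ^ (b-1) * X 4 = X 0 ^ (b-1) * X 4 ^ 1 by ring,
        X_mul_X]
      refine NF_mul_mono k a b ha _ _ r ?_
      simp only [Finsupp.add_apply, Finsupp.single_apply]
      norm_num
      exact nf2 ha _ _ _ _ _ (by omega)
    · refine NF_mul_all k a b ha _ (fun e r => ?_)
      rw [show (X 1 : MvPolynomial (Fin 5) k) ^ (a-1) * X 4 = X 1 ^ (a-1) * X 4 ^ 1 by ring,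
        X_mul_X]
      refine NF_mul_mono k a b ha _ _ r ?_
      simp only [Finsupp.add_apply, Finsupp.single_apply]
      norm_num
      exact nf3 ha _ _ _ _ _ (by omega)
    · refine NF_mul_all k a b ha _ (fun e r => ?_)
      rw [show (X 3 : MvPolynomial (Fin 5) k) * X 4 = X 3 ^ 1 * X 4 ^ 1 by ring, X_mul_X]
      refine NF_mul_mono k a b ha _ _ r ?_
      simp only [Finsupp.add_apply, Finsupp.single_apply]
      norm_num
      exact nf4 ha _ _ _ _ _ (by omega)
    · refine NF_mul_all k a b ha _ (fun e r => ?_)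
      rw [X_pow_eq_monomial]
      refine NF_mul_mono k a b ha _ _ r ?_
      simp only [Finsupp.add_apply, Finsupp.single_apply]
      norm_num
      exact nf5 ha _ _ _ _ _
    · refine NF_mul_all k a b ha _ (fun e r => ?_)
      rw [X_pow_eq_monomial]
      refine NF_mul_mono k a b ha _ _ r ?_
      simp only [Finsupp.add_apply, Finsupp.single_apply]
      norm_num
      exact nf6 ha _ _ _ _ _
    · refine NF_mul_all k a b ha _ (fun e r => ?_)
      rw [show (X 2 : MvPolynomial (Fin 5) k) * X 3 = X 2 ^ 1 * X 3 ^ 1 by ring, X_mul_X]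
      refine NF_mul_mono k a b ha _ _ r ?_
      simp only [Finsupp.add_apply, Finsupp.single_apply]
      norm_num
      exact nf7 ha _ _ _ _ _
    · refine NF_mul_all k a b ha _ (fun e r => ?_)
      rw [show (X 0 : MvPolynomial (Fin 5) k) * X 3 = X 0 ^ 1 * X 3 ^ 1 by ring, X_mul_X,
        show (X 1 : MvPolynomial (Fin 5) k) ^ (a-1) * X 2 = X 1 ^ (a-1) * X 2 ^ 1 by ring,
        X_mul_X]
      refine NF_mul_sub k a b ha _ _ _ r ?_
      simp only [Finsupp.add_apply, Finsupp.single_apply]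
      norm_num
      exact nf8 ha _ _ _ _ _
    · refine NF_mul_all k a b ha _ (fun e r => ?_)
      rw [show (X 1 : MvPolynomial (Fin 5) k) * X 3 = X 1 ^ 1 * X 3 ^ 1 by ring, X_mul_X,
        show (X 0 : MvPolynomial (Fin 5) k) ^ (b-1) * X 2 = X 0 ^ (b-1) * X 2 ^ 1 by ring,
        X_mul_X]
      refine NF_mul_sub k a b ha _ _ _ r ?_
      simp only [Finsupp.add_apply, Finsupp.single_apply]
      norm_num
      exact nf9 ha hb _ _ _ _ _
  · intro p
    rw [mul_zero, map_zero]
  · intro x y hx hy hx' hy' p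
    rw [mul_add, map_add, hx' p, hy' p, add_zero]
  · intro c x hx hx' p
    rw [smul_eq_mul, show p * (c * x) = (p * c) * x by ring, hx' (p * c)]

end Kill

def relSet (a b : ℕ) (k : Type*) [Field k] : Set (MvPolynomial (Fin 5) k) :=
  {X 0 ^ b - X 1 ^ a, X 0 ^ (b - 1) * X 4, X 1 ^ (a - 1) * X 4,
    X 3 * X 4, X 2 ^ 2, X 3 ^ 2, X 2 * X 3,
    X 0 * X 3 - X 1 ^ (a - 1) * X 2, X 1 * X 3 - X 0 ^ (b - 1) * X 2}

section SpanSide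

variable {k : Type*} [Field k] {a b : ℕ} (ha : 2 ≤ a) (hb : 2 ≤ b)
variable (I : Ideal (MvPolynomial (Fin 5) k))

lemma rel1 (hI : I = Ideal.span (relSet a b k)) : (Ideal.Quotient.mk I (X 0)) ^ b = (Ideal.Quotient.mk I (X 1)) ^ a := by
  rw [← map_pow, ← map_pow, Ideal.Quotient.eq, hI]
  exact Ideal.subset_span (by simp [relSet])

lemma rel2 (hI : I = Ideal.span (relSet a b k)) : (Ideal.Quotient.mk I (X 0)) ^ (b - 1) * Ideal.Quotient.mk I (X 4) = 0 := by
  rw [← map_pow, ← map_mul, Ideal.Quotient.eq_zero_iff_mem, hI]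
  exact Ideal.subset_span (by simp [relSet])

lemma rel3 (hI : I = Ideal.span (relSet a b k)) : (Ideal.Quotient.mk I (X 1)) ^ (a - 1) * Ideal.Quotient.mk I (X 4) = 0 := by
  rw [← map_pow, ← map_mul, Ideal.Quotient.eq_zero_iff_mem, hI]
  exact Ideal.subset_span (by simp [relSet])

lemma rel4 (hI : I = Ideal.span (relSet a b k)) : Ideal.Quotient.mk I (X 3) * Ideal.Quotient.mk I (X 4) = 0 := by
  rw [← map_mul, Ideal.Quotient.eq_zero_iff_mem, hI]
  exact Ideal.subset_span (by simp [relSet])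

lemma rel5 (hI : I = Ideal.span (relSet a b k)) : (Ideal.Quotient.mk I (X 2)) ^ 2 = 0 := by
  rw [← map_pow, Ideal.Quotient.eq_zero_iff_mem, hI]
  exact Ideal.subset_span (by simp [relSet])

lemma rel6 (hI : I = Ideal.span (relSet a b k)) : (Ideal.Quotient.mk I (X 3)) ^ 2 = 0 := by
  rw [← map_pow, Ideal.Quotient.eq_zero_iff_mem, hI]
  exact Ideal.subset_span (by simp [relSet])

lemma rel7 (hI : I = Ideal.span (relSet a b k)) : Ideal.Quotient.mk I (X 2) * Ideal.Quotient.mk I (X 3) = 0 := by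
  rw [← map_mul, Ideal.Quotient.eq_zero_iff_mem, hI]
  exact Ideal.subset_span (by simp [relSet])

lemma rel8 (hI : I = Ideal.span (relSet a b k)) : Ideal.Quotient.mk I (X 0) * Ideal.Quotient.mk I (X 3) =
    (Ideal.Quotient.mk I (X 1)) ^ (a - 1) * Ideal.Quotient.mk I (X 2) := by
  rw [← map_mul, ← map_pow, ← map_mul, Ideal.Quotient.eq, hI]
  exact Ideal.subset_span (by simp [relSet])

lemma rel9 (hI : I = Ideal.span (relSet a b k)) : Ideal.Quotient.mk I (X 1) * Ideal.Quotient.mk I (X 3) =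
    (Ideal.Quotient.mk I (X 0)) ^ (b - 1) * Ideal.Quotient.mk I (X 2) := by
  rw [← map_mul, ← map_pow, ← map_mul, Ideal.Quotient.eq, hI]
  exact Ideal.subset_span (by simp [relSet])

lemma pow_red {R : Type*} [CommRing R] (a b : ℕ) (x y : R) (h : x ^ b = y ^ a) (n r : ℕ) :
    y ^ (a * n + r) = x ^ (b * n) * y ^ r := by
  induction n with
  | zero => simp
  | succ n ih =>
    rw [show a * (n + 1) + r = a + (a * n + r) by ring, pow_add, ih,
      show b * (n + 1) = b + b * n by ring, pow_add, ← h]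
    ring

lemma pow_red' {R : Type*} [CommRing R] (a b : ℕ) (x y : R) (h : x ^ b = y ^ a) (v : ℕ) :
    y ^ v = x ^ (b * (v / a)) * y ^ (v % a) := by
  conv_lhs => rw [← Nat.div_add_mod v a]
  exact pow_red a b x y h (v / a) (v % a)

lemma mk_red (hI : I = Ideal.span (relSet a b k)) (w : MvPolynomial (Fin 5) k) (P T)
    (hP : ∀ p : ℕ × Fin a, rep a b k (P p) = X 0 ^ p.1 * X 1 ^ ((p.2 : Fin a) : ℕ) * w)
    (hT : ∀ p : Fin (b - 1) × Fin (a - 1) × {q : ℕ // 1 ≤ q},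
      rep a b k (T p) = X 0 ^ ((p.1 : Fin (b-1)) : ℕ) * X 1 ^ ((p.2.1 : Fin (a-1)) : ℕ) * w *
        X 4 ^ ((p.2.2 : {q : ℕ // 1 ≤ q}) : ℕ))
    (u v q : ℕ) :
    Ideal.Quotient.mk I (X 0 ^ u * X 1 ^ v * w * X 4 ^ q) =
      (red a b ha P T u v q).elim 0 (fun i => Ideal.Quotient.mk I (rep a b k i)) := by
  unfold red
  by_cases hq : q = 0
  · rw [dif_pos hq]
    subst hq
    show _ = Ideal.Quotient.mk I (rep a b k (P _))
    rw [hP]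
    simp only [map_mul, map_pow, pow_zero, map_one, mul_one]
    rw [pow_red' a b _ _ (rel1 I hI) v]
    ring
  · rw [dif_neg hq]
    by_cases h : u < b - 1 ∧ v < a - 1
    · rw [dif_pos h]
      show _ = Ideal.Quotient.mk I (rep a b k (T _))
      rw [hT]
    · rw [dif_neg h]
      show _ = 0
      simp only [map_mul, map_pow]
      obtain ⟨q', rfl⟩ : ∃ q', q = q' + 1 := ⟨q - 1, by omega⟩
      rcases not_and_or.mp h with hu | hv
      · obtain ⟨u', rfl⟩ : ∃ u', u = (b - 1) + u' := ⟨u - (b - 1), by omega⟩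
        linear_combination ((Ideal.Quotient.mk I (X 0)) ^ u' *
          (Ideal.Quotient.mk I (X 1)) ^ v * Ideal.Quotient.mk I w *
          (Ideal.Quotient.mk I (X 4)) ^ q') * rel2 I hI
      · obtain ⟨v', rfl⟩ : ∃ v', v = (a - 1) + v' := ⟨v - (a - 1), by omega⟩
        linear_combination ((Ideal.Quotient.mk I (X 0)) ^ u *
          (Ideal.Quotient.mk I (X 1)) ^ v' * Ideal.Quotient.mk I w *
          (Ideal.Quotient.mk I (X 4)) ^ q') * rel3 I hI

lemma mk_mono (hI : I = Ideal.span (relSet a b k)) (u v c d q : ℕ) :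
    Ideal.Quotient.mk I (X 0 ^ u * X 1 ^ v * X 2 ^ c * X 3 ^ d * X 4 ^ q) =
      (nf a b ha u v c d q).elim 0 (fun i => Ideal.Quotient.mk I (rep a b k i)) := by
  have hP1 : ∀ p : ℕ × Fin a, rep a b k (inP p) =
      X 0 ^ p.1 * X 1 ^ ((p.2 : Fin a) : ℕ) * 1 := by
    intro p; simp [rep, inP]
  have hT1 : ∀ p, rep a b k (inPT p) =
      X 0 ^ ((p.1 : Fin (b-1)) : ℕ) * X 1 ^ ((p.2.1 : Fin (a-1)) : ℕ) * 1 *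
        X 4 ^ ((p.2.2 : {q : ℕ // 1 ≤ q}) : ℕ) := by
    intro p; simp [rep, inPT]
  have hP2 : ∀ p : ℕ × Fin a, rep a b k (inY p) =
      X 0 ^ p.1 * X 1 ^ ((p.2 : Fin a) : ℕ) * X 2 := by
    intro p; simp [rep, inY]
  have hT2 : ∀ p, rep a b k (inYT p) =
      X 0 ^ ((p.1 : Fin (b-1)) : ℕ) * X 1 ^ ((p.2.1 : Fin (a-1)) : ℕ) * X 2 *
        X 4 ^ ((p.2.2 : {q : ℕ // 1 ≤ q}) : ℕ) := by
    intro p; simp [rep, inYT]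
  match c, d with
  | 0, 0 =>
    rw [nfP, ← mk_red ha I hI 1 inP inPT hP1 hT1 u v q]
    ring_nf
  | 1, 0 =>
    rw [nfY, ← mk_red ha I hI (X 2) inY inYT hP2 hT2 u v q]
    ring_nf
  | 0, 1 =>
    rw [nfY2]
    by_cases hq : q = 0
    · rw [if_pos hq]
      subst hq
      rcases Nat.eq_zero_or_pos u with rfl | hu
      · rw [if_pos rfl]
        rcases Nat.eq_zero_or_pos v with rfl | hv
        · rw [if_pos rfl]
          show _ = Ideal.Quotient.mk I (rep a b k inZ)
          show _ = Ideal.Quotient.mk I (X 3)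
          simp
        · rw [if_neg (by omega)]
          rw [← mk_red ha I hI (X 2) inY inYT hP2 hT2 (b - 1) (v - 1) 0]
          obtain ⟨v', rfl⟩ : ∃ v', v = v' + 1 := ⟨v - 1, by omega⟩
          simp only [map_mul, map_pow, Nat.add_sub_cancel]
          linear_combination ((Ideal.Quotient.mk I (X 1)) ^ v') * rel9 I hI
      · rw [if_neg (by omega)]
        rw [← mk_red ha I hI (X 2) inY inYT hP2 hT2 (u - 1) (v + (a - 1)) 0]
        obtain ⟨u', rfl⟩ : ∃ u', u = u' + 1 := ⟨u - 1, by omega⟩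
        simp only [map_mul, map_pow, Nat.add_sub_cancel]
        linear_combination ((Ideal.Quotient.mk I (X 0)) ^ u' *
          (Ideal.Quotient.mk I (X 1)) ^ v) * rel8 I hI
    · rw [if_neg hq]
      show _ = 0
      simp only [map_mul, map_pow]
      obtain ⟨q', rfl⟩ : ∃ q', q = q' + 1 := ⟨q - 1, by omega⟩
      linear_combination ((Ideal.Quotient.mk I (X 0)) ^ u *
        (Ideal.Quotient.mk I (X 1)) ^ v * (Ideal.Quotient.mk I (X 4)) ^ q') * rel4 I hI
  | 0, d + 2 =>
    rw [nf6]
    show _ = 0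
    simp only [map_mul, map_pow]
    linear_combination ((Ideal.Quotient.mk I (X 0)) ^ u * (Ideal.Quotient.mk I (X 1)) ^ v *
      (Ideal.Quotient.mk I (X 3)) ^ d * (Ideal.Quotient.mk I (X 4)) ^ q) * rel6 I hI
  | 1, d + 1 =>
    rw [nf7]
    show _ = 0
    simp only [map_mul, map_pow]
    linear_combination ((Ideal.Quotient.mk I (X 0)) ^ u * (Ideal.Quotient.mk I (X 1)) ^ v *
      (Ideal.Quotient.mk I (X 3)) ^ d * (Ideal.Quotient.mk I (X 4)) ^ q) * rel7 I hI
  | c + 2, d =>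
    rw [nf5]
    show _ = 0
    simp only [map_mul, map_pow]
    linear_combination ((Ideal.Quotient.mk I (X 0)) ^ u * (Ideal.Quotient.mk I (X 1)) ^ v *
      (Ideal.Quotient.mk I (X 2)) ^ c * (Ideal.Quotient.mk I (X 3)) ^ d *
      (Ideal.Quotient.mk I (X 4)) ^ q) * rel5 I hI

end SpanSide

section FinEq
lemma fe00 : ((0:Fin 5) = 0) = True := by simp
lemma fe01 : ((0:Fin 5) = 1) = False := by simp
lemma fe02 : ((0:Fin 5) = 2) = False := by simp
lemma fe03 : ((0:Fin 5) = 3) = False := by simp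
lemma fe04 : ((0:Fin 5) = 4) = False := by simp
lemma fe10 : ((1:Fin 5) = 0) = False := by simp
lemma fe11 : ((1:Fin 5) = 1) = True := by simp
lemma fe12 : ((1:Fin 5) = 2) = False := by simp
lemma fe13 : ((1:Fin 5) = 3) = False := by simp
lemma fe14 : ((1:Fin 5) = 4) = False := by simp
lemma fe20 : ((2:Fin 5) = 0) = False := by simp
lemma fe21 : ((2:Fin 5) = 1) = False := by simp
lemma fe22 : ((2:Fin 5) = 2) = True := by simp
lemma fe23 : ((2:Fin 5) = 3) = False := by simp
lemma fe24 : ((2:Fin 5) = 4) = False := by simp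
lemma fe30 : ((3:Fin 5) = 0) = False := by simp
lemma fe31 : ((3:Fin 5) = 1) = False := by simp
lemma fe32 : ((3:Fin 5) = 2) = False := by simp
lemma fe33 : ((3:Fin 5) = 3) = True := by simp
lemma fe34 : ((3:Fin 5) = 4) = False := by simp
lemma fe40 : ((4:Fin 5) = 0) = False := by simp
lemma fe41 : ((4:Fin 5) = 1) = False := by simp
lemma fe42 : ((4:Fin 5) = 2) = False := by simp
lemma fe43 : ((4:Fin 5) = 3) = False := by simp
lemma fe44 : ((4:Fin 5) = 4) = True := by simp
end FinEq

section NFRep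

variable (k : Type*) [Field k] (a b : ℕ) (ha : 2 ≤ a) (hb : 2 ≤ b)

lemma X_mul_X_mul_X (i j l : Fin 5) (m n p : ℕ) :
    (X i : MvPolynomial (Fin 5) k) ^ m * X j ^ n * X l ^ p =
      monomial (Finsupp.single i m + Finsupp.single j n + Finsupp.single l p) 1 := by
  rw [X_mul_X, X_pow_eq_monomial, monomial_mul, one_mul]

lemma X_mul_X_mul_X_mul_X (i j l o : Fin 5) (m n p r : ℕ) :
    (X i : MvPolynomial (Fin 5) k) ^ m * X j ^ n * X l ^ p * X o ^ r =
      monomial (Finsupp.single i m + Finsupp.single j n + Finsupp.single l p +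
        Finsupp.single o r) 1 := by
  rw [X_mul_X_mul_X, X_pow_eq_monomial, monomial_mul, one_mul]

lemma NF_rep (i : Idx a b) :
    NF k a b ha (rep a b k i) = Finsupp.single i 1 := by
  rcases i with p | p | p | p | u
  · show NF k a b ha (X 0 ^ p.1 * X 1 ^ (p.2 : ℕ)) = _
    rw [X_mul_X, NF_monomial, h0]
    simp only [Finsupp.add_apply, Finsupp.single_apply, fe00, fe01, fe02, fe03, fe04, fe10, fe11, fe12, fe13, fe14, fe20, fe21, fe22, fe23, fe24, fe30, fe31, fe32, fe33, fe34, fe40, fe41, fe42, fe43, fe44, if_true, if_false, add_zero, zero_add]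
    rw [show nf a b ha p.1 (p.2 : ℕ) 0 0 0 = red a b ha inP inPT p.1 (p.2 : ℕ) 0 from rfl,
      red_self_q0 ha inP inPT p.1 p.2]
    simp [inP]
  · show NF k a b ha (X 0 ^ (p.1 : ℕ) * X 1 ^ (p.2.1 : ℕ) * X 4 ^ (p.2.2 : ℕ)) = _
    rw [X_mul_X_mul_X, NF_monomial, h0]
    simp only [Finsupp.add_apply, Finsupp.single_apply, fe00, fe01, fe02, fe03, fe04, fe10, fe11, fe12, fe13, fe14, fe20, fe21, fe22, fe23, fe24, fe30, fe31, fe32, fe33, fe34, fe40, fe41, fe42, fe43, fe44, if_true, if_false, add_zero, zero_add]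
    rw [show nf a b ha (p.1 : ℕ) (p.2.1 : ℕ) 0 0 (p.2.2 : ℕ) =
      red a b ha inP inPT (p.1 : ℕ) (p.2.1 : ℕ) (p.2.2 : ℕ) from rfl,
      red_self_T ha inP inPT p.1 p.2.1 p.2.2]
    simp [inPT]
  · show NF k a b ha (X 0 ^ p.1 * X 1 ^ (p.2 : ℕ) * X 2) = _
    rw [show (X 2 : MvPolynomial (Fin 5) k) = X 2 ^ 1 from (pow_one _).symm,
      X_mul_X_mul_X, NF_monomial, h0]
    simp only [Finsupp.add_apply, Finsupp.single_apply, fe00, fe01, fe02, fe03, fe04, fe10, fe11, fe12, fe13, fe14, fe20, fe21, fe22, fe23, fe24, fe30, fe31, fe32, fe33, fe34, fe40, fe41, fe42, fe43, fe44, if_true, if_false, add_zero, zero_add]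
    rw [show nf a b ha p.1 (p.2 : ℕ) 1 0 0 = red a b ha inY inYT p.1 (p.2 : ℕ) 0 from rfl,
      red_self_q0 ha inY inYT p.1 p.2]
    simp [inY]
  · show NF k a b ha (X 0 ^ (p.1 : ℕ) * X 1 ^ (p.2.1 : ℕ) * X 2 * X 4 ^ (p.2.2 : ℕ)) = _
    rw [show (X 2 : MvPolynomial (Fin 5) k) = X 2 ^ 1 from (pow_one _).symm,
      X_mul_X_mul_X_mul_X, NF_monomial, h0]
    simp only [Finsupp.add_apply, Finsupp.single_apply, fe00, fe01, fe02, fe03, fe04, fe10, fe11, fe12, fe13, fe14, fe20, fe21, fe22, fe23, fe24, fe30, fe31, fe32, fe33, fe34, fe40, fe41, fe42, fe43, fe44, if_true, if_false, add_zero, zero_add]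
    rw [show nf a b ha (p.1 : ℕ) (p.2.1 : ℕ) 1 0 (p.2.2 : ℕ) =
      red a b ha inY inYT (p.1 : ℕ) (p.2.1 : ℕ) (p.2.2 : ℕ) from rfl,
      red_self_T ha inY inYT p.1 p.2.1 p.2.2]
    simp [inYT]
  · obtain ⟨⟩ := u
    show NF k a b ha (X 3) = _
    rw [show (X 3 : MvPolynomial (Fin 5) k) = X 3 ^ 1 from (pow_one _).symm,
      X_pow_eq_monomial, NF_monomial, h0]
    have e0 : (Finsupp.single (3 : Fin 5) 1) 0 = 0 := by simp
    have e1 : (Finsupp.single (3 : Fin 5) 1) 1 = 0 := by simp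
    have e2 : (Finsupp.single (3 : Fin 5) 1) 2 = 0 := by simp
    have e3 : (Finsupp.single (3 : Fin 5) 1) 3 = 1 := by simp
    have e4 : (Finsupp.single (3 : Fin 5) 1) 4 = 0 := by simp
    rw [e0, e1, e2, e3, e4, show nf a b ha 0 0 0 1 0 = some inZ from rfl]
    simp [inZ]

lemma mono_eq_prod (e : Fin 5 →₀ ℕ) :
    (monomial e 1 : MvPolynomial (Fin 5) k) =
      X 0 ^ (e 0) * X 1 ^ (e 1) * X 2 ^ (e 2) * X 3 ^ (e 3) * X 4 ^ (e 4) := by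
  rw [monomial_eq, map_one, one_mul, Finsupp.prod_pow, Fin.prod_univ_five]

end NFRep

end HCCI
open MvPolynomial in
/-- In the quotient `R = k[X₁,X₂,Y₁,Y₂,T]/I` (with `X₁ = X 0`, `X₂ = X 1`, `Y₁ = X 2`,
`Y₂ = X 3`, `T = X 4`) by the ideal generated by the relations of Theorem A, the
residue classes of the monomials `X₁^u X₂^v` (`v ≤ a-1`), `X₁^u X₂^v T^q`
(`u ≤ b-2`, `v ≤ a-2`, `q ≥ 1`), `X₁^u X₂^v Y₁` (`v ≤ a-1`),
`X₁^u X₂^v Y₁ T^q` (`u ≤ b-2`, `v ≤ a-2`, `q ≥ 1`) and `Y₂` form a `k`-basis. -/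
theorem basis_of_hochschild_cohomology_ring_caseI (k : Type*) [Field k] (a b : ℕ)
    (hab : Nat.Coprime a b) (ha : 2 ≤ a) (hb : 2 ≤ b)
    (I : Ideal (MvPolynomial (Fin 5) k))
    (hI : I = Ideal.span
      {X 0 ^ b - X 1 ^ a, X 0 ^ (b - 1) * X 4, X 1 ^ (a - 1) * X 4, X 3 * X 4,
        X 2 ^ 2, X 3 ^ 2, X 2 * X 3,
        X 0 * X 3 - X 1 ^ (a - 1) * X 2, X 1 * X 3 - X 0 ^ (b - 1) * X 2})
    (f : (ℕ × Fin a) ⊕ (Fin (b - 1) × Fin (a - 1) × {q : ℕ // 1 ≤ q}) ⊕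
        (ℕ × Fin a) ⊕ (Fin (b - 1) × Fin (a - 1) × {q : ℕ // 1 ≤ q}) ⊕ Unit →
        MvPolynomial (Fin 5) k ⧸ I)
    (hf : f = Sum.elim
      (fun p => Ideal.Quotient.mk I (X 0 ^ p.1 * X 1 ^ (p.2 : ℕ)))
      (Sum.elim
        (fun p => Ideal.Quotient.mk I
          (X 0 ^ (p.1 : ℕ) * X 1 ^ (p.2.1 : ℕ) * X 4 ^ (p.2.2 : ℕ)))
        (Sum.elim
          (fun p => Ideal.Quotient.mk I (X 0 ^ p.1 * X 1 ^ (p.2 : ℕ) * X 2))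
          (Sum.elim
            (fun p => Ideal.Quotient.mk I
              (X 0 ^ (p.1 : ℕ) * X 1 ^ (p.2.1 : ℕ) * X 2 * X 4 ^ (p.2.2 : ℕ)))
            (fun _ => Ideal.Quotient.mk I (X 3)))))) :
    LinearIndependent k f ∧ Submodule.span k (Set.range f) = ⊤ := by
  have hI' : I = Ideal.span (HCCI.relSet a b k) := by rw [hI, HCCI.relSet]
  have hfrep : ∀ i : HCCI.Idx a b, f i = Ideal.Quotient.mk I (HCCI.rep a b k i) := by
    subst hf
    rintro (p | p | p | p | u) <;> rfl
  constructor
  · rw [linearIndependent_iff]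
    intro l hl
    have hrep0 : Finsupp.linearCombination k f l =
        (Ideal.Quotient.mkₐ k I).toLinearMap
          (Finsupp.linearCombination k (HCCI.rep a b k) l) := by
      have hfc : f = ⇑(Ideal.Quotient.mkₐ k I).toLinearMap ∘ HCCI.rep a b k := by
        funext i
        rw [hfrep i]
        simp [Ideal.Quotient.mkₐ_eq_mk]
      rw [hfc]
      exact (Finsupp.apply_linearCombination k _ _ l).symm
    have hmk0 : Ideal.Quotient.mk I (Finsupp.linearCombination k (HCCI.rep a b k) l) = 0 := by
      have h2 : (Ideal.Quotient.mkₐ k I).toLinearMap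
          (Finsupp.linearCombination k (HCCI.rep a b k) l) = 0 := by rw [← hrep0]; exact hl
      rw [← Ideal.Quotient.mkₐ_eq_mk k I]
      exact h2
    have hmem : Finsupp.linearCombination k (HCCI.rep a b k) l ∈ I :=
      Ideal.Quotient.eq_zero_iff_mem.mp hmk0
    have hNF := HCCI.NF_span k a b ha hb _ (hI ▸ hmem)
    rw [Finsupp.apply_linearCombination] at hNF
    have hcomp : (⇑(HCCI.NF k a b ha) ∘ HCCI.rep a b k) =
        fun i : HCCI.Idx a b => Finsupp.single i (1 : k) :=
      funext fun i => HCCI.NF_rep k a b ha i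
    rw [hcomp, Finsupp.linearCombination_apply] at hNF
    simpa [Finsupp.smul_single, Finsupp.sum_single] using hNF
  · rw [eq_top_iff]
    rintro x -
    obtain ⟨p, rfl⟩ := Ideal.Quotient.mk_surjective x
    induction p using MvPolynomial.induction_on' with
    | add p q hp hq => rw [RingHom.map_add]; exact Submodule.add_mem _ hp hq
    | monomial e r =>
      have h1 : (Ideal.Quotient.mk I) (monomial e r) =
          r • (Ideal.Quotient.mk I) (monomial e 1) := by
        rw [show (monomial e r : MvPolynomial (Fin 5) k) = r • monomial e 1 by
          rw [smul_monomial, smul_eq_mul, mul_one], ← Ideal.Quotient.mkₐ_eq_mk k I]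
        exact map_smul (Ideal.Quotient.mkₐ k I) r (monomial e 1)
      rw [h1]
      refine Submodule.smul_mem _ r ?_
      rw [HCCI.mono_eq_prod, HCCI.mk_mono ha I hI' (e 0) (e 1) (e 2) (e 3) (e 4)]
      rcases hnf : HCCI.nf a b ha (e 0) (e 1) (e 2) (e 3) (e 4) with _ | i
      · simp
      · show Ideal.Quotient.mk I (HCCI.rep a b k i) ∈ _
        rw [← hfrep i]
        exact Submodule.subset_span ⟨i, rfl⟩
end

section
/- In the quotient R = k[X1, X2, Y, T]/I of the commutative polynomial ring in four variables by the ideal I generated by X1^b - X2^a, X1^(b-1)*T and Y^2 - X2^(a-2)*T, the residue classes of the following monomials form a k-basis of R: X1^u*X2^v*Y^i with 0 ≤ u ≤ b-1, v ∈ ℕ and i ∈ {0, 1}; and X1^u*X2^v*Y^i*T^q with 0 ≤ u ≤ b-2, 0 ≤ v ≤ a-1, i ∈ {0, 1} and q ≥ 1. -/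
open MvPolynomial Finsupp

namespace CaseIIAux

abbrev Idx (a b : ℕ) := (Fin b × ℕ × Fin 2) ⊕ (Fin (b - 1) × Fin a × Fin 2 × {q : ℕ // 1 ≤ q})

variable (a b : ℕ) (ha : 2 ≤ a) (hb : 2 ≤ b)

/-- Normal form on already-`Y`-reduced exponent data. -/
def N0 (u v i q : ℕ) : Option (Idx a b) :=
  have _ha : 2 ≤ a := ha
  have _hb : 2 ≤ b := hb
  if hq : q = 0 then
    some (Sum.inl (⟨u % b, Nat.mod_lt _ (by omega)⟩, v + a * (u / b),
      ⟨i % 2, Nat.mod_lt _ (by omega)⟩))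
  else if h : u < b - 1 ∧ v < a then
    some (Sum.inr (⟨u, h.1⟩, ⟨v, h.2⟩, ⟨i % 2, Nat.mod_lt _ (by omega)⟩, ⟨q, by omega⟩))
  else none

/-- Normal form on exponent data. -/
def NN (u v i q : ℕ) : Option (Idx a b) :=
  have _ha : 2 ≤ a := ha
  N0 a b ha hb u (v + (a - 2) * (i / 2)) (i % 2) (q + i / 2)

include ha hb in
theorem N0_1 (u v i q : ℕ) : N0 a b ha hb (u + b) v i q = N0 a b ha hb u (v + a) i q := by
  unfold N0
  split_ifs with h1 h2 h3 <;> first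
  | rfl
  | omega
  | (simp only [Option.some.injEq, Sum.inl.injEq, Prod.mk.injEq, Fin.mk.injEq]
     refine ⟨Nat.add_mod_right u b, ?_, trivial⟩
     rw [Nat.add_div_right u (by omega : 0 < b)]
     ring)

include ha hb in
theorem N0_2 (u v i q : ℕ) : N0 a b ha hb (u + (b - 1)) v i (q + 1) = none := by
  unfold N0
  rw [dif_neg (by omega), dif_neg (by omega)]

include ha hb in
theorem NN_1 (u v i q : ℕ) : NN a b ha hb (u + b) v i q = NN a b ha hb u (v + a) i q := by
  unfold NN
  rw [N0_1]
  congr 1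
  ring

include ha hb in
theorem NN_2 (u v i q : ℕ) : NN a b ha hb (u + (b - 1)) v i (q + 1) = none := by
  unfold NN
  rw [show q + 1 + i / 2 = (q + i / 2) + 1 by omega, N0_2]

include ha hb in
theorem NN_3 (u v i q : ℕ) : NN a b ha hb u v (i + 2) q = NN a b ha hb u (v + (a - 2)) i (q + 1) := by
  unfold NN
  rw [Nat.add_mod_right, Nat.add_div_right _ (by norm_num : 0 < 2)]
  congr 1 <;> ring

include ha hb in
theorem NN_normal1 (u v i : ℕ) (hu : u < b) (hi : i < 2) :
    NN a b ha hb u v i 0 = some (Sum.inl (⟨u, hu⟩, v, ⟨i, hi⟩)) := by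
  unfold NN N0
  rw [Nat.div_eq_of_lt hi, dif_pos (by simp)]
  simp [Nat.mod_eq_of_lt hu, Nat.mod_eq_of_lt hi, Nat.div_eq_of_lt hu]

include ha hb in
theorem NN_normal2 (u v i q : ℕ) (hu : u < b - 1) (hv : v < a) (hi : i < 2) (hq : 1 ≤ q) :
    NN a b ha hb u v i q = some (Sum.inr (⟨u, hu⟩, ⟨v, hv⟩, ⟨i, hi⟩, ⟨q, hq⟩)) := by
  unfold NN N0
  rw [Nat.div_eq_of_lt hi, dif_neg (by omega)]
  rw [dif_pos (by simpa using ⟨hu, hv⟩)]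
  simp [Nat.mod_eq_of_lt hi]

/-! ### Exponents and monomials -/

noncomputable def Em (u v i q : ℕ) : Fin 4 →₀ ℕ :=
  Finsupp.single 0 u + Finsupp.single 1 v + Finsupp.single 2 i + Finsupp.single 3 q

theorem Em0 (u v i q : ℕ) : Em u v i q 0 = u := by
  simp (config := { decide := true }) [Em, Finsupp.single_apply]
theorem Em1 (u v i q : ℕ) : Em u v i q 1 = v := by
  simp (config := { decide := true }) [Em, Finsupp.single_apply]
theorem Em2 (u v i q : ℕ) : Em u v i q 2 = i := by
  simp (config := { decide := true }) [Em, Finsupp.single_apply]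
theorem Em3 (u v i q : ℕ) : Em u v i q 3 = q := by
  simp (config := { decide := true }) [Em, Finsupp.single_apply]

theorem eq_Em (e : Fin 4 →₀ ℕ) : e = Em (e 0) (e 1) (e 2) (e 3) := by
  ext j
  fin_cases j <;> simp (config := { decide := true }) [Em, Finsupp.single_apply]

variable {k : Type*} [Field k]

noncomputable def mono (u v i q : ℕ) : MvPolynomial (Fin 4) k :=
  X 0 ^ u * X 1 ^ v * X 2 ^ i * X 3 ^ q

theorem mono_eq (u v i q : ℕ) : (mono u v i q : MvPolynomial (Fin 4) k) = monomial (Em u v i q) 1 := by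
  simp [mono, Em, X_pow_eq_monomial, monomial_mul]

noncomputable def NE (e : Fin 4 →₀ ℕ) : Option (Idx a b) :=
  NN a b ha hb (e 0) (e 1) (e 2) (e 3)

theorem NE_add_Em (e : Fin 4 →₀ ℕ) (u v i q : ℕ) :
    NE a b ha hb (e + Em u v i q) = NN a b ha hb (e 0 + u) (e 1 + v) (e 2 + i) (e 3 + q) := by
  simp [NE, Em0, Em1, Em2, Em3]

theorem NE_Em (u v i q : ℕ) : NE a b ha hb (Em u v i q) = NN a b ha hb u v i q := by
  simp [NE, Em0, Em1, Em2, Em3]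

/-! ### The linear map to the free module -/

noncomputable def phi : MvPolynomial (Fin 4) k →ₗ[k] (Idx a b →₀ k) :=
  Finsupp.lsum k (fun e => (NE a b ha hb e).elim 0 Finsupp.lsingle) ∘ₗ
    (AddMonoidAlgebra.coeffLinearEquiv k).toLinearMap

theorem phi_monomial (e : Fin 4 →₀ ℕ) (c : k) :
    phi a b ha hb (monomial e c) = (NE a b ha hb e).elim 0 (fun j => Finsupp.single j c) := by
  have h1 : phi a b ha hb (monomial e c)
      = ((NE a b ha hb e).elim 0 Finsupp.lsingle : k →ₗ[k] _) c := by
    rw [phi, LinearMap.comp_apply]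
    exact Finsupp.sum_single_index (by simp)
  rw [h1]
  cases NE a b ha hb e <;> rfl

/-! ### Ideal relations -/

variable (I : Ideal (MvPolynomial (Fin 4) k))
variable (hI : I = Ideal.span
  {X 0 ^ b - X 1 ^ a, X 0 ^ (b - 1) * X 3, X 2 ^ 2 - X 1 ^ (a - 2) * X 3})

include hI in
theorem R1 (u v i q : ℕ) :
    Ideal.Quotient.mk I (mono (u + b) v i q) = Ideal.Quotient.mk I (mono u (v + a) i q) := by
  rw [Ideal.Quotient.eq]
  have h : (mono (u + b) v i q : MvPolynomial (Fin 4) k) - mono u (v + a) i q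
      = mono u v i q * (X 0 ^ b - X 1 ^ a) := by
    simp only [mono]; ring
  rw [h, hI]
  exact Ideal.mul_mem_left _ _ (Ideal.subset_span (by simp))

include hI in
theorem R2 (u v i q : ℕ) :
    Ideal.Quotient.mk I (mono (u + (b - 1)) v i (q + 1)) = 0 := by
  rw [Ideal.Quotient.eq_zero_iff_mem]
  have h : (mono (u + (b - 1)) v i (q + 1) : MvPolynomial (Fin 4) k)
      = mono u v i q * (X 0 ^ (b - 1) * X 3) := by
    simp only [mono]; ring
  rw [h, hI]
  exact Ideal.mul_mem_left _ _ (Ideal.subset_span (by simp))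

include hI in
theorem R3 (u v i q : ℕ) :
    Ideal.Quotient.mk I (mono u v (i + 2) q)
      = Ideal.Quotient.mk I (mono u (v + (a - 2)) i (q + 1)) := by
  rw [Ideal.Quotient.eq]
  have h : (mono u v (i + 2) q : MvPolynomial (Fin 4) k) - mono u (v + (a - 2)) i (q + 1)
      = mono u v i q * (X 2 ^ 2 - X 1 ^ (a - 2) * X 3) := by
    simp only [mono]; ring
  rw [h, hI]
  exact Ideal.mul_mem_left _ _ (Ideal.subset_span (by simp))

include ha hb hI in
theorem Rz (u v i q : ℕ) (hq : 1 ≤ q) (hv : a ≤ v) :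
    Ideal.Quotient.mk I (mono u v i q : MvPolynomial (Fin 4) k) = 0 := by
  obtain ⟨v', rfl⟩ : ∃ v', v = v' + a := ⟨v - a, by omega⟩
  obtain ⟨q', rfl⟩ : ∃ q', q = q' + 1 := ⟨q - 1, by omega⟩
  rw [← R1 a b I hI u v' i (q' + 1), show u + b = (u + 1) + (b - 1) by omega]
  exact R2 a b I hI (u + 1) v' i q'


/-- The three generators written as (differences of) monomials. -/
theorem gen1_eq : (X 0 ^ b - X 1 ^ a : MvPolynomial (Fin 4) k)
    = monomial (Em b 0 0 0) 1 - monomial (Em 0 a 0 0) 1 := by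
  rw [← mono_eq, ← mono_eq]; simp only [mono]; ring

theorem gen2_eq : (X 0 ^ (b - 1) * X 3 : MvPolynomial (Fin 4) k)
    = monomial (Em (b - 1) 0 0 1) 1 := by
  rw [← mono_eq]; simp only [mono]; ring

theorem gen3_eq : (X 2 ^ 2 - X 1 ^ (a - 2) * X 3 : MvPolynomial (Fin 4) k)
    = monomial (Em 0 0 2 0) 1 - monomial (Em 0 (a - 2) 0 1) 1 := by
  rw [← mono_eq, ← mono_eq]; simp only [mono]; ring

include hI in
theorem phi_I (p : MvPolynomial (Fin 4) k) (hp : p ∈ I) : phi a b ha hb p = 0 := by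
  have key : ∀ g ∈ ({X 0 ^ b - X 1 ^ a, X 0 ^ (b - 1) * X 3,
      X 2 ^ 2 - X 1 ^ (a - 2) * X 3} : Set (MvPolynomial (Fin 4) k)),
      ∀ r : MvPolynomial (Fin 4) k, phi a b ha hb (r * g) = 0 := by
    intro g hg r
    induction r using MvPolynomial.induction_on' with
    | add p q hp hq => rw [add_mul, map_add, hp, hq, add_zero]
    | monomial e c =>
      simp only [Set.mem_insert_iff, Set.mem_singleton_iff] at hg
      rcases hg with rfl | rfl | rfl
      · rw [gen1_eq, mul_sub, monomial_mul, monomial_mul, map_sub,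
          phi_monomial, phi_monomial, NE_add_Em, NE_add_Em]
        simp only [add_zero]
        rw [NN_1 a b ha hb, sub_self]
      · rw [gen2_eq, monomial_mul, phi_monomial, NE_add_Em]
        simp only [add_zero]
        rw [NN_2 a b ha hb, Option.elim]
      · rw [gen3_eq, mul_sub, monomial_mul, monomial_mul, map_sub,
          phi_monomial, phi_monomial, NE_add_Em, NE_add_Em]
        simp only [add_zero]
        rw [NN_3 a b ha hb, sub_self]
  have main : ∀ x ∈ I, ∀ r : MvPolynomial (Fin 4) k, phi a b ha hb (r * x) = 0 := by
    intro x hx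
    rw [hI] at hx
    induction hx using Submodule.span_induction with
    | mem g hg => exact key g hg
    | zero => intro r; rw [mul_zero, map_zero]
    | add x y _ _ hx hy => intro r; rw [mul_add, map_add, hx r, hy r, add_zero]
    | smul s x _ hx =>
      intro r
      rw [smul_eq_mul, ← mul_assoc]
      exact hx (r * s)
  simpa using main p hp 1

/-- Representative polynomials for the basis monomials. -/
noncomputable def P : Idx a b → MvPolynomial (Fin 4) k :=
  Sum.elim (fun p => mono (p.1 : ℕ) p.2.1 (p.2.2 : ℕ) 0)
    (fun p => mono (p.1 : ℕ) (p.2.1 : ℕ) (p.2.2.1 : ℕ) (p.2.2.2 : ℕ))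

include ha hb in
theorem phi_P (j : Idx a b) : phi a b ha hb (P a b (k := k) j) = Finsupp.single j 1 := by
  rcases j with ⟨u, v, i⟩ | ⟨u, v, i, q⟩
  · rw [P, Sum.elim_inl, mono_eq, phi_monomial, NE_Em,
      NN_normal1 a b ha hb _ _ _ u.isLt i.isLt]
    rfl
  · rw [P, Sum.elim_inr, mono_eq, phi_monomial, NE_Em,
      NN_normal2 a b ha hb _ _ _ _ u.isLt v.isLt i.isLt q.2]
    rfl


noncomputable def stdf : Idx a b → MvPolynomial (Fin 4) k ⧸ I :=
  fun j => Ideal.Quotient.mk I (P a b j)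

include ha hb hI in
theorem mem_span_mono (u v i q : ℕ) :
    Ideal.Quotient.mk I (mono u v i q : MvPolynomial (Fin 4) k)
      ∈ Submodule.span k (Set.range (stdf a b I)) := by
  by_cases hi : 2 ≤ i
  · obtain ⟨i', rfl⟩ : ∃ i', i = i' + 2 := ⟨i - 2, by omega⟩
    rw [R3 a b I hI]
    exact mem_span_mono u (v + (a - 2)) i' (q + 1)
  · by_cases hq : q = 0
    · subst hq
      by_cases hu : b ≤ u
      · obtain ⟨u', rfl⟩ : ∃ u', u = u' + b := ⟨u - b, by omega⟩
        rw [R1 a b I hI]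
        exact mem_span_mono u' (v + a) i 0
      · exact Submodule.subset_span ⟨Sum.inl (⟨u, by omega⟩, v, ⟨i, by omega⟩), rfl⟩
    · by_cases hu : b - 1 ≤ u
      · obtain ⟨u', rfl⟩ : ∃ u', u = u' + (b - 1) := ⟨u - (b - 1), by omega⟩
        obtain ⟨q', rfl⟩ : ∃ q', q = q' + 1 := ⟨q - 1, by omega⟩
        rw [R2 a b I hI]
        exact Submodule.zero_mem _
      · by_cases hv : a ≤ v
        · rw [Rz a b ha hb I hI u v i q (by omega) hv]
          exact Submodule.zero_mem _
        · exact Submodule.subset_span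
            ⟨Sum.inr (⟨u, by omega⟩, ⟨v, by omega⟩, ⟨i, by omega⟩, ⟨q, by omega⟩), rfl⟩
termination_by u + i

include ha hb hI in
theorem span_top : Submodule.span k (Set.range (stdf a b I)) = ⊤ := by
  rw [eq_top_iff]
  rintro x -
  obtain ⟨p, rfl⟩ := Ideal.Quotient.mk_surjective x
  induction p using MvPolynomial.induction_on' with
  | monomial e c =>
    have h1 : (monomial e c : MvPolynomial (Fin 4) k)
        = c • mono (e 0) (e 1) (e 2) (e 3) := by
      rw [mono_eq, ← eq_Em, smul_monomial, smul_eq_mul, mul_one]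
    have hsm : Ideal.Quotient.mk I (c • (mono (e 0) (e 1) (e 2) (e 3) : MvPolynomial (Fin 4) k))
        = c • Ideal.Quotient.mk I (mono (e 0) (e 1) (e 2) (e 3)) := by
      rw [← Ideal.Quotient.mkₐ_eq_mk k I]
      exact map_smul _ c _
    rw [h1, hsm]
    exact Submodule.smul_mem _ _ (mem_span_mono a b ha hb I hI _ _ _ _)
  | add p q hp hq => rw [RingHom.map_add]; exact Submodule.add_mem _ hp hq

theorem lc_single (l : Idx a b →₀ k) :
    Finsupp.linearCombination k (fun j : Idx a b => Finsupp.single j (1 : k)) l = l := by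
  induction l using Finsupp.induction_linear with
  | zero => simp
  | add f g hf hg => rw [map_add, hf, hg]
  | single j c => rw [Finsupp.linearCombination_single, Finsupp.smul_single, smul_eq_mul, mul_one]

include ha hb hI in
theorem indep : LinearIndependent k (stdf a b I) := by
  rw [linearIndependent_iff]
  intro l hl
  have h2 : Finsupp.linearCombination k (stdf a b I) l
      = Ideal.Quotient.mkₐ k I (Finsupp.linearCombination k (P a b) l) :=
    (Finsupp.apply_linearCombination k (Ideal.Quotient.mkₐ k I).toLinearMap (P a b) l).symm
  rw [h2] at hl
  have h3 : Finsupp.linearCombination k (P a b (k := k)) l ∈ I := by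
    rwa [Ideal.Quotient.mkₐ_eq_mk, Ideal.Quotient.eq_zero_iff_mem] at hl
  have h4 := phi_I a b ha hb I hI _ h3
  rw [Finsupp.apply_linearCombination k] at h4
  have h5 : (⇑(phi a b ha hb (k := k)) ∘ P a b) = fun j : Idx a b => Finsupp.single j (1 : k) :=
    _root_.funext fun j => phi_P a b ha hb j
  rw [h5] at h4
  rw [lc_single] at h4
  exact h4

end CaseIIAux

open MvPolynomial in
/-- In the quotient `R = k[X₁,X₂,Y,T]/I` (with `X₁ = X 0`, `X₂ = X 1`, `Y = X 2`,
`T = X 3`) by the ideal generated by `X₁^b - X₂^a`, `X₁^(b-1)·T` and `Y² - X₂^(a-2)·T`,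
the residue classes of the monomials `X₁^u X₂^v Y^i` (`u ≤ b-1`, `v ∈ ℕ`, `i ∈ {0,1}`)
and `X₁^u X₂^v Y^i T^q` (`u ≤ b-2`, `v ≤ a-1`, `i ∈ {0,1}`, `q ≥ 1`) form a `k`-basis. -/
theorem basis_of_hochschild_cohomology_ring_caseII (k : Type*) [Field k] (a b : ℕ)
    (hab : Nat.Coprime a b) (ha : 2 ≤ a) (hb : 2 ≤ b)
    (I : Ideal (MvPolynomial (Fin 4) k))
    (hI : I = Ideal.span
      {X 0 ^ b - X 1 ^ a, X 0 ^ (b - 1) * X 3, X 2 ^ 2 - X 1 ^ (a - 2) * X 3})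
    (f : (Fin b × ℕ × Fin 2) ⊕ (Fin (b - 1) × Fin a × Fin 2 × {q : ℕ // 1 ≤ q}) →
        MvPolynomial (Fin 4) k ⧸ I)
    (hf : f = Sum.elim
      (fun p => Ideal.Quotient.mk I
        (X 0 ^ (p.1 : ℕ) * X 1 ^ p.2.1 * X 2 ^ (p.2.2 : ℕ)))
      (fun p => Ideal.Quotient.mk I
        (X 0 ^ (p.1 : ℕ) * X 1 ^ (p.2.1 : ℕ) * X 2 ^ (p.2.2.1 : ℕ) *
          X 3 ^ (p.2.2.2 : ℕ)))) :
    LinearIndependent k f ∧ Submodule.span k (Set.range f) = ⊤ := by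
  have hfs : f = CaseIIAux.stdf a b I := by
    rw [hf]
    funext j
    rcases j with ⟨u, v, i⟩ | ⟨u, v, i, q⟩ <;>
      simp [CaseIIAux.stdf, CaseIIAux.P, CaseIIAux.mono]
  rw [hfs]
  exact ⟨CaseIIAux.indep a b ha hb I hI, CaseIIAux.span_top a b ha hb I hI⟩
end

section
/- The monomials s^n with n ∈ S form a k-basis of the k-subalgebra of the polynomial ring k[s] generated by s^a and s^b; in particular, as a k-submodule of k[s], this subalgebra equals the k-linear span of {s^n : n ∈ S}. -/
/-- The monomials `s^n` with `n ∈ S` form a `k`-basis of the `k`-subalgebra of `k[s]`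
generated by `s^a` and `s^b`: they are `k`-linearly independent, and as a
`k`-submodule of `k[s]` this subalgebra equals the span of `{s^n : n ∈ S}`. -/
theorem semigroup_algebra_monomial_basis (k : Type*) [Field k] (a b : ℕ)
    (hab : Nat.Coprime a b) (ha : 2 ≤ a) (hb : 2 ≤ b) :
    LinearIndependent k (fun n : {n : ℕ // ∃ u v : ℕ, n = u * a + v * b} =>
      (Polynomial.X : Polynomial k) ^ (n : ℕ)) ∧
    Subalgebra.toSubmodule
        (Algebra.adjoin k {(Polynomial.X : Polynomial k) ^ a, Polynomial.X ^ b}) =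
      Submodule.span k {p : Polynomial k |
        ∃ n : ℕ, (∃ u v : ℕ, n = u * a + v * b) ∧ p = Polynomial.X ^ n} := by
  constructor
  · have h := (Polynomial.basisMonomials k).linearIndependent
    have h2 := h.comp (fun n : {n : ℕ // ∃ u v : ℕ, n = u * a + v * b} => (n : ℕ))
      Subtype.val_injective
    convert h2 using 2 with n
    simp [Polynomial.coe_basisMonomials, Polynomial.X_pow_eq_monomial]
  · apply le_antisymm
    · rw [Algebra.adjoin_eq_span]
      apply Submodule.span_le.2
      intro p hp
      apply Submodule.subset_span
      induction hp using Submonoid.closure_induction with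
      | mem x hx =>
          rcases hx with rfl | rfl
          · exact ⟨a, ⟨1, 0, by ring⟩, rfl⟩
          · exact ⟨b, ⟨0, 1, by ring⟩, rfl⟩
      | one => exact ⟨0, ⟨0, 0, by ring⟩, (pow_zero _).symm⟩
      | mul x y hx hy ihx ihy =>
          obtain ⟨m, ⟨u1, v1, rfl⟩, rfl⟩ := ihx
          obtain ⟨n, ⟨u2, v2, rfl⟩, rfl⟩ := ihy
          exact ⟨_, ⟨u1 + u2, v1 + v2, by ring⟩, (pow_add _ _ _).symm⟩
    · apply Submodule.span_le.2
      rintro p ⟨n, ⟨u, v, rfl⟩, rfl⟩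
      have : (Polynomial.X : Polynomial k) ^ (u * a + v * b) =
          ((Polynomial.X : Polynomial k) ^ a) ^ u * ((Polynomial.X : Polynomial k) ^ b) ^ v := by
        rw [pow_add, ← pow_mul, ← pow_mul, mul_comm a u, mul_comm b v]
      rw [SetLike.mem_coe, Subalgebra.mem_toSubmodule, this]
      exact mul_mem (pow_mem (Algebra.subset_adjoin (by simp)) u)
        (pow_mem (Algebra.subset_adjoin (by simp)) v)
end
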